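/- arXiv:math/0702852 — 3 statements merged into one kernel-verified Lean document; each statement's English description precedes it below -/
import Mathlib

section
/- Let ι : A → B be a cofibration and j : A → C any continuous map. Then the natural projection from the double mapping cylinder M(ι,j) = (B ⊔ C) ∪_{ι,j} (A × [0,1]) to the pushout B ∪_A C, collapsing the cylinder, is a homotopy equivalence. -/
open unitInterval

/-!
STATEMENT 4: Let `ι : A → B` be a cofibration and `j : A → C` any continuous map. Then
the natural projection from the double mapping cylinder
`M(ι,j) = (B ⊔ C) ∪_{ι,j} (A × [0,1])` to the pushout `B ∪_A C`, collapsing the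
cylinder, is a homotopy equivalence.
-/

/-- A cofibration: a map satisfying the homotopy extension property. -/
def Cofibration {A B : Type} [TopologicalSpace A] [TopologicalSpace B] (ι : C(A, B)) :
    Prop :=
  ∀ (T : Type) [TopologicalSpace T] (f : C(B, T)) (H : C(A × I, T)),
    (∀ a, H (a, 0) = f (ι a)) →
    ∃ G : C(B × I, T), (∀ b, G (b, 0) = f b) ∧ ∀ a t, G (ι a, t) = H (a, t)

variable {A B C' : Type} [TopologicalSpace A] [TopologicalSpace B] [TopologicalSpace C']

/-- The identifications defining the double mapping cylinder:
`(a,0) ∼ ι a` and `(a,1) ∼ j a`. -/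
inductive CylRel (ι : C(A, B)) (j : C(A, C')) :
    (B ⊕ (C' ⊕ (A × I))) → (B ⊕ (C' ⊕ (A × I))) → Prop
  | zero (a : A) : CylRel ι j (Sum.inr (Sum.inr (a, 0))) (Sum.inl (ι a))
  | one (a : A) : CylRel ι j (Sum.inr (Sum.inr (a, 1))) (Sum.inr (Sum.inl (j a)))

/-- The double mapping cylinder `M(ι,j)`. -/
def DblCyl (ι : C(A, B)) (j : C(A, C')) : Type := Quot (CylRel ι j)

instance (ι : C(A, B)) (j : C(A, C')) : TopologicalSpace (DblCyl ι j) := by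
  unfold DblCyl; infer_instance

/-- The identification defining the pushout `B ∪_A C`: `ι a ∼ j a`. -/
inductive PORel (ι : C(A, B)) (j : C(A, C')) : (B ⊕ C') → (B ⊕ C') → Prop
  | glue (a : A) : PORel ι j (Sum.inl (ι a)) (Sum.inr (j a))

/-- The pushout `B ∪_A C`. -/
def Pushout (ι : C(A, B)) (j : C(A, C')) : Type := Quot (PORel ι j)

instance (ι : C(A, B)) (j : C(A, C')) : TopologicalSpace (Pushout ι j) := by
  unfold Pushout; infer_instance

/-- The projection `M(ι,j) → B ∪_A C` collapsing each cylinder line `{a} × [0,1]`. -/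
def cylProj (ι : C(A, B)) (j : C(A, C')) : DblCyl ι j → Pushout ι j :=
  Quot.lift
    (Sum.elim (fun b => Quot.mk _ (Sum.inl b))
      (Sum.elim (fun c => Quot.mk _ (Sum.inr c))
        (fun a => Quot.mk (PORel ι j) (Sum.inl (ι a.1)))))
    (by
      rintro x y (⟨a⟩ | ⟨a⟩)
      · rfl
      · exact Quot.sound (PORel.glue a))

private lemma sigmaMulCont : Continuous (fun p : I × I => σ (σ p.1 * σ p.2)) := by
  continuity

theorem stmt4 (ι : C(A, B)) (hι : Cofibration ι) (j : C(A, C')) :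
    ∃ h : ContinuousMap.HomotopyEquiv (DblCyl ι j) (Pushout ι j),
      ⇑h.toFun = cylProj ι j := by
  classical
  -- the continuous projection
  have hproj : Continuous (cylProj ι j) := by
    apply continuous_quot_lift
    apply Continuous.sumElim
    · exact continuous_quot_mk.comp continuous_inl
    apply Continuous.sumElim
    · exact continuous_quot_mk.comp continuous_inr
    · exact continuous_quot_mk.comp (continuous_inl.comp (ι.continuous.comp continuous_fst))
  set πc : C(DblCyl ι j, Pushout ι j) := ⟨cylProj ι j, hproj⟩ with hπc
  -- apply HEP to the inclusion of B in the double cylinder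
  obtain ⟨G, hG0, hGa⟩ :=
    @hι (DblCyl ι j) (instTopologicalSpaceDblCyl ι j)
      ⟨fun b => Quot.mk _ (Sum.inl b), continuous_quot_mk.comp continuous_inl⟩
      ⟨fun p => Quot.mk _ (Sum.inr (Sum.inr p)),
        continuous_quot_mk.comp (continuous_inr.comp continuous_inr)⟩
      (fun a => Quot.sound (CylRel.zero a))
  -- the homotopy inverse
  have hswd : ∀ x y, PORel ι j x y →
      Sum.elim (fun b : B => G (b, 1))
        (fun c => Quot.mk (CylRel ι j) (Sum.inr (Sum.inl c))) x =
      Sum.elim (fun b : B => G (b, 1))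
        (fun c => Quot.mk (CylRel ι j) (Sum.inr (Sum.inl c))) y := by
    rintro x y ⟨a⟩
    exact (hGa a 1).trans (Quot.sound (CylRel.one a))
  set s : C(Pushout ι j, DblCyl ι j) :=
    ⟨Quot.lift _ hswd, by
      apply continuous_quot_lift
      apply Continuous.sumElim
      · exact G.continuous.comp (continuous_id.prodMk continuous_const)
      · exact continuous_quot_mk.comp (continuous_inr.comp continuous_inl)⟩ with hs
  -- the homotopy on the double cylinder, as a map into C(I, DblCyl)
  set cylMap : C((A × I) × I, DblCyl ι j) :=
    ⟨fun q => Quot.mk _ (Sum.inr (Sum.inr (q.1.1, σ (σ q.1.2 * σ q.2)))), by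
      apply continuous_quot_mk.comp
      apply continuous_inr.comp
      apply continuous_inr.comp
      exact Continuous.prodMk (continuous_fst.comp continuous_fst)
        (sigmaMulCont.comp ((continuous_snd.comp continuous_fst).prodMk continuous_snd))⟩
        with hcyl
  have hLwd : ∀ x y, CylRel ι j x y →
      Sum.elim G.curry
        (Sum.elim (fun c => ContinuousMap.const I (Quot.mk (CylRel ι j) (Sum.inr (Sum.inl c))))
          cylMap.curry) x =
      Sum.elim G.curry
        (Sum.elim (fun c => ContinuousMap.const I (Quot.mk (CylRel ι j) (Sum.inr (Sum.inl c))))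
          cylMap.curry) y := by
    rintro x y (⟨a⟩ | ⟨a⟩) <;> ext t
    · exact (congrArg (fun u => Quot.mk (CylRel ι j) (Sum.inr (Sum.inr (a, u))))
        (show σ (σ 0 * σ t) = t by simp)).trans (hGa a t).symm
    · exact (congrArg (fun u => Quot.mk (CylRel ι j) (Sum.inr (Sum.inr (a, u))))
        (show σ (σ 1 * σ t) = 1 by simp)).trans (Quot.sound (CylRel.one a))
  set Lc : C(DblCyl ι j, C(I, DblCyl ι j)) :=
    ⟨Quot.lift _ hLwd, by
      apply continuous_quot_lift
      apply Continuous.sumElim G.curry.continuous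
      apply Continuous.sumElim
      · exact ContinuousMap.const'.continuous.comp
          (continuous_quot_mk.comp (continuous_inr.comp continuous_inl))
      · exact cylMap.curry.continuous⟩ with hLc
  -- homotopy from id to s ∘ π on the double cylinder
  have hL0 : ∀ x : DblCyl ι j,
      (Lc.uncurry.comp (⟨Prod.swap, continuous_swap⟩ :
        C(I × DblCyl ι j, DblCyl ι j × I))) (0, x) = ContinuousMap.id (DblCyl ι j) x := by
    apply Quot.ind
    rintro (b | c | ⟨a, t⟩)
    · exact hG0 b
    · rfl
    · exact congrArg (fun u => Quot.mk (CylRel ι j) (Sum.inr (Sum.inr (a, u))))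
        (show σ (σ t * σ 0) = t by simp)
  have hL1 : ∀ x : DblCyl ι j,
      (Lc.uncurry.comp (⟨Prod.swap, continuous_swap⟩ :
        C(I × DblCyl ι j, DblCyl ι j × I))) (1, x) = (s.comp πc) x := by
    apply Quot.ind
    rintro (b | c | ⟨a, t⟩)
    · rfl
    · rfl
    · exact (congrArg (fun u => Quot.mk (CylRel ι j) (Sum.inr (Sum.inr (a, u))))
        (show σ (σ t * σ 1) = 1 by simp)).trans (hGa a 1).symm
  have H1 : ContinuousMap.Homotopy (ContinuousMap.id (DblCyl ι j)) (s.comp πc) :=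
    { toContinuousMap := Lc.uncurry.comp ⟨Prod.swap, continuous_swap⟩
      map_zero_left := hL0
      map_one_left := hL1 }
  -- homotopy from id to π ∘ s on the pushout
  have hKwd : ∀ x y, PORel ι j x y →
      Sum.elim (πc.comp G).curry
        (fun c => ContinuousMap.const I (Quot.mk (PORel ι j) (Sum.inr c))) x =
      Sum.elim (πc.comp G).curry
        (fun c => ContinuousMap.const I (Quot.mk (PORel ι j) (Sum.inr c))) y := by
    rintro x y ⟨a⟩
    ext t
    simp only [Sum.elim_inl, Sum.elim_inr, ContinuousMap.curry_apply,
      ContinuousMap.comp_apply, ContinuousMap.const_apply]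
    rw [hGa a t]
    exact Quot.sound (PORel.glue a)
  set Kc : C(Pushout ι j, C(I, Pushout ι j)) :=
    ⟨Quot.lift _ hKwd, by
      apply continuous_quot_lift
      apply Continuous.sumElim (πc.comp G).curry.continuous
      exact ContinuousMap.const'.continuous.comp
        (continuous_quot_mk.comp continuous_inr)⟩ with hKc
  have hK0 : ∀ x : Pushout ι j,
      (Kc.uncurry.comp (⟨Prod.swap, continuous_swap⟩ :
        C(I × Pushout ι j, Pushout ι j × I))) (0, x) = ContinuousMap.id (Pushout ι j) x := by
    apply Quot.ind
    rintro (b | c)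
    · exact congrArg πc (hG0 b)
    · rfl
  have hK1 : ∀ x : Pushout ι j,
      (Kc.uncurry.comp (⟨Prod.swap, continuous_swap⟩ :
        C(I × Pushout ι j, Pushout ι j × I))) (1, x) = (πc.comp s) x := by
    apply Quot.ind
    rintro (b | c)
    · rfl
    · rfl
  have H2 : ContinuousMap.Homotopy (ContinuousMap.id (Pushout ι j)) (πc.comp s) :=
    { toContinuousMap := Kc.uncurry.comp ⟨Prod.swap, continuous_swap⟩
      map_zero_left := hK0
      map_one_left := hK1 }
  exact ⟨{ toFun := πc, invFun := s, left_inv := ⟨H1.symm⟩, right_inv := ⟨H2.symm⟩ }, by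
    show ⇑πc = cylProj ι j
    conv_lhs => rw [hπc]
    rfl⟩
end

section
/- In a manifold with faces M, any disjoint union of connected faces is itself a manifold with faces. -/
/-!
STATEMENT 10: In a manifold with faces `M`, any disjoint union of connected faces is
itself a manifold with faces.

A manifold with corners of dimension `n` is formalized as a space with charts onto open
subsets of the orthant `ℝ_{≥0}^n` (realized as `Fin n → ℝ≥0`), together with the depth
function `c : M → ℕ` counting the zero coordinates in any chart.  A connected face is
the closure of a connected component of `{x | c x = 1}`, and `M` is a manifold with
faces if every `x` lies in exactly `c x` connected faces.  The disjoint union `N` of a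
family of connected faces is a manifold with corners of dimension `n - 1` with depth
function `x ↦ c x - 1`.
-/

/-- The connected faces of a manifold with corners with depth function `c` : the
closures of the connected components of the depth-one stratum `{x | c x = 1}`. -/
def connFaces (M : Type*) [TopologicalSpace M] (c : M → ℕ) : Set (Set M) :=
  {A | ∃ x : M, c x = 1 ∧ A = closure (connectedComponentIn {y | c y = 1} x)}

/-- `M` is an `n`-dimensional manifold with faces, with corner-depth function `c` :
it has charts onto open subsets of the orthant `ℝ_{≥0}^n` along which `c` counts the
vanishing coordinates, and every point `x` lies in exactly `c x` connected faces. -/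
def IsManifoldWithFaces (M : Type*) [TopologicalSpace M] (n : ℕ) (c : M → ℕ) : Prop :=
  (∀ x : M, ∃ (U : Set M) (V : Set (Fin n → NNReal)) (φ : U ≃ₜ V),
    x ∈ U ∧ IsOpen U ∧ IsOpen V ∧
    ∀ y : U, c y.1 = {i | (φ y : Fin n → NNReal) i = 0}.ncard) ∧
  ∀ x : M, {A | A ∈ connFaces M c ∧ x ∈ A}.ncard = c x


section Stmt10AuxSection

open Set Metric Topology

namespace Stmt10Aux

open Classical in
/-- The face generated by a preconnected subset of the stratum. -/
noncomputable def faceOf {X : Type*} [TopologicalSpace X] (P : Set X) (s : Set X) : Set X :=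
  if h : s.Nonempty then closure (connectedComponentIn P h.some) else ∅

variable {X : Type*} [TopologicalSpace X] {P s : Set X} {z : X}

lemma faceOf_eq (hs : IsPreconnected s) (hsP : s ⊆ P) (hz : z ∈ s) :
    faceOf P s = closure (connectedComponentIn P z) := by
  have hne : s.Nonempty := ⟨z, hz⟩
  rw [faceOf]; rw [dif_pos hne]
  have hsub : s ⊆ connectedComponentIn P z := hs.subset_connectedComponentIn hz hsP
  exact congrArg closure (connectedComponentIn_eq (hsub hne.some_mem)).symm

lemma closure_subset_faceOf (hs : IsPreconnected s) (hsP : s ⊆ P) (hz : z ∈ s) :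
    closure s ⊆ faceOf P s := by
  rw [faceOf_eq hs hsP hz]
  exact closure_mono (hs.subset_connectedComponentIn hz hsP)

lemma faceOf_mem_connFaces {cc : X → ℕ} (hs : IsPreconnected s)
    (hsP : s ⊆ {y | cc y = 1}) (hne : s.Nonempty) :
    faceOf {y | cc y = 1} s ∈ connFaces X cc := by
  refine ⟨hne.some, hsP hne.some_mem, ?_⟩
  rw [faceOf]; rw [dif_pos hne]


variable {n : ℕ}

/-- coordinate factor of a slice: within distance ε of `v₀ j`, forced to `0` on `I`,
forced nonzero on other coordinates where `v₀` vanishes. -/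
def slF (v₀ : Fin n → NNReal) (ε : ℝ) (I : Set (Fin n)) (j : Fin n) : Set NNReal :=
  {t | dist t (v₀ j) < ε ∧ (j ∈ I → t = 0) ∧ (j ∉ I → v₀ j = 0 → t ≠ 0)}

def sl (v₀ : Fin n → NNReal) (ε : ℝ) (I : Set (Fin n)) : Set (Fin n → NNReal) :=
  Set.pi univ (slF v₀ ε I)

lemma mem_sl {v₀ : Fin n → NNReal} {ε : ℝ} {I : Set (Fin n)} {v : Fin n → NNReal} :
    v ∈ sl v₀ ε I ↔ (∀ j, dist (v j) (v₀ j) < ε) ∧ (∀ j ∈ I, v j = 0) ∧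
      (∀ j, j ∉ I → v₀ j = 0 → v j ≠ 0) := by
  simp only [sl, slF, mem_pi, mem_univ, forall_true_left, mem_setOf_eq]
  constructor
  · intro h
    exact ⟨fun j => (h j).1, fun j hj => (h j).2.1 hj, fun j hj h0 => (h j).2.2 hj h0⟩
  · rintro ⟨h1, h2, h3⟩ j
    exact ⟨h1 j, fun hj => h2 j hj, fun hj h0 => h3 j hj h0⟩

lemma ordConnected_ball (a : NNReal) (ε : ℝ) : (ball a ε).OrdConnected := by
  constructor
  rintro x hx y hy z hz
  simp only [mem_ball, NNReal.dist_eq] at *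
  rcases hz with ⟨h1, h2⟩
  rw [abs_lt] at hx hy ⊢
  constructor
  · have : (x : ℝ) ≤ z := h1
    linarith [hx.1]
  · have : (z : ℝ) ≤ y := h2
    linarith [hy.2]

lemma ordConnected_slF (v₀ : Fin n → NNReal) (ε : ℝ) (I : Set (Fin n)) (j : Fin n) :
    (slF v₀ ε I j).OrdConnected := by
  have h1 : slF v₀ ε I j = (ball (v₀ j) ε) ∩ ({t | j ∈ I → t = 0} ∩ {t | j ∉ I → v₀ j = 0 → t ≠ 0}) := by
    ext t; simp [slF, mem_ball, and_assoc]
  rw [h1]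
  apply Set.OrdConnected.inter (ordConnected_ball _ _)
  apply Set.OrdConnected.inter
  · by_cases hj : j ∈ I
    · have : {t : NNReal | j ∈ I → t = 0} = Icc 0 0 := by
        ext t; simp only [mem_setOf_eq, Set.Icc_self, mem_singleton_iff]; simp [hj]
      rw [this]; exact ordConnected_Icc
    · have : {t : NNReal | j ∈ I → t = 0} = univ := by ext t; simp [hj]
      rw [this]; exact ordConnected_univ
  · by_cases hj : j ∉ I ∧ v₀ j = 0
    · have : {t : NNReal | j ∉ I → v₀ j = 0 → t ≠ 0} = Ioi 0 := by
        ext t; simp [hj.1, hj.2, pos_iff_ne_zero]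
      rw [this]; exact ordConnected_Ioi
    · have : {t : NNReal | j ∉ I → v₀ j = 0 → t ≠ 0} = univ := by
        ext t; simp only [mem_setOf_eq, mem_univ, iff_true]
        intro h1 h2; exact absurd ⟨h1, h2⟩ hj
      rw [this]; exact ordConnected_univ

lemma sl_preconnected (v₀ : Fin n → NNReal) (ε : ℝ) (I : Set (Fin n)) :
    IsPreconnected (sl v₀ ε I) :=
  isPreconnected_univ_pi fun j => (ordConnected_slF v₀ ε I j).isPreconnected

lemma sl_nonempty {v₀ : Fin n → NNReal} {ε : ℝ} (hε : 0 < ε) {I : Set (Fin n)}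
    (hI : ∀ j ∈ I, v₀ j = 0) : (sl v₀ ε I).Nonempty := by
  classical
  refine ⟨fun j => if j ∉ I ∧ v₀ j = 0 then (ε / 2).toNNReal else v₀ j, ?_⟩
  rw [mem_sl]
  refine ⟨fun j => ?_, fun j hj => ?_, fun j hj h0 => ?_⟩
  · by_cases h : j ∉ I ∧ v₀ j = 0
    · rw [if_pos h, h.2, NNReal.dist_eq]
      simp only [NNReal.coe_zero, sub_zero]
      rw [Real.coe_toNNReal _ (by linarith), abs_of_nonneg (by linarith)]
      linarith
    · rw [if_neg h, dist_self]; exact hε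
  · rw [if_neg (by simp [hj])]
    exact hI j hj
  · rw [if_pos ⟨hj, h0⟩]
    intro hcon
    have := Real.toNNReal_eq_zero.mp hcon
    linarith

lemma sl_mem_closure {v₀ : Fin n → NNReal} {ε : ℝ} (hε : 0 < ε) {I : Set (Fin n)}
    {v : Fin n → NNReal} (hv : ∀ j, dist (v j) (v₀ j) < ε) (hvI : ∀ j ∈ I, v j = 0)
    (hI : ∀ j ∈ I, v₀ j = 0) : v ∈ closure (sl v₀ ε I) := by
  rw [sl, closure_pi_set]
  intro j _
  simp only [Function.comp]
  by_cases hj : j ∉ I ∧ v₀ j = 0 ∧ v j = 0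
  · -- need to approximate by small positive values
    rw [Metric.mem_closure_iff]
    intro δ hδ
    have hmin0 : (0:ℝ) ≤ min (δ / 2) (ε / 2) := le_min (by linarith) (by linarith)
    refine ⟨(min (δ / 2) (ε / 2)).toNNReal, ?_, ?_⟩
    · constructor
      · rw [hj.2.1, NNReal.dist_eq]
        simp only [NNReal.coe_zero, sub_zero]
        rw [Real.coe_toNNReal _ hmin0, abs_of_nonneg hmin0]
        exact lt_of_le_of_lt (min_le_right _ _) (by linarith)
      · refine ⟨fun h => absurd h hj.1, fun _ _ => ?_⟩
        intro hcon
        have := Real.toNNReal_eq_zero.mp hcon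
        have := lt_min (by linarith : (0:ℝ) < δ / 2) (by linarith : (0:ℝ) < ε / 2)
        linarith
    · rw [hj.2.2, NNReal.dist_eq]
      simp only [NNReal.coe_zero, zero_sub, abs_neg]
      rw [Real.coe_toNNReal _ hmin0, abs_of_nonneg hmin0]
      exact lt_of_le_of_lt (min_le_left _ _) (by linarith)
  · apply subset_closure
    refine ⟨hv j, fun hjI => hvI j hjI, fun hjI h0 hcon => ?_⟩
    exact hj ⟨hjI, h0, hcon⟩

lemma zeros_of_mem_sl {v₀ : Fin n → NNReal} {ε : ℝ} {I : Set (Fin n)}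
    (hsmall : ∀ j, v₀ j ≠ 0 → ε ≤ (v₀ j : ℝ)) {v : Fin n → NNReal} (hv : v ∈ sl v₀ ε I) :
    {j | v j = 0} = I := by
  rw [mem_sl] at hv
  ext j
  simp only [mem_setOf_eq]
  constructor
  · intro h0
    by_contra hj
    by_cases hv0 : v₀ j = 0
    · exact hv.2.2 j hj hv0 h0
    · have := hv.1 j
      rw [h0, NNReal.dist_eq] at this
      simp only [NNReal.coe_zero, zero_sub, abs_neg] at this
      rw [abs_of_nonneg (NNReal.coe_nonneg _)] at this
      exact absurd this (not_lt.mpr (hsmall j hv0))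
  · exact hv.2.1 j

lemma sl_subset_ball {v₀ : Fin n → NNReal} {ε : ℝ} (hε : 0 < ε) {I : Set (Fin n)} :
    sl v₀ ε I ⊆ ball v₀ ε := by
  intro v hv
  rw [mem_sl] at hv
  rw [mem_ball, dist_pi_lt_iff hε]
  exact hv.1


/-- A box chart at a point `x`. -/
structure BoxAt (M : Type*) [TopologicalSpace M] (n : ℕ) (c : M → ℕ) (x : M) where
  U : Set M
  V : Set (Fin n → NNReal)
  φ : ↥U ≃ₜ ↥V
  hxU : x ∈ U
  hUopen : IsOpen U
  hVopen : IsOpen V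
  hcard : ∀ y : U, c y.1 = {i | (φ y : Fin n → NNReal) i = 0}.ncard
  ε : ℝ
  εpos : 0 < ε
  ball_sub : Metric.ball (φ ⟨x, hxU⟩ : Fin n → NNReal) ε ⊆ V
  small : ∀ i, (φ ⟨x, hxU⟩ : Fin n → NNReal) i ≠ 0 → ε ≤ ((φ ⟨x, hxU⟩ : Fin n → NNReal) i : ℝ)

variable {M : Type*} [TopologicalSpace M] {n : ℕ} {c : M → ℕ} {x : M}

/-- existence of box charts -/
lemma boxAt_nonempty
    (h1 : ∀ x : M, ∃ (U : Set M) (V : Set (Fin n → NNReal)) (φ : ↥U ≃ₜ ↥V),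
      x ∈ U ∧ IsOpen U ∧ IsOpen V ∧
      ∀ y : U, c y.1 = {i | (φ y : Fin n → NNReal) i = 0}.ncard) (x : M) :
    Nonempty (BoxAt M n c x) := by
  classical
  obtain ⟨U, V, φ, hxU, hUo, hVo, hcard⟩ := h1 x
  set v₀ : Fin n → NNReal := (φ ⟨x, hxU⟩ : Fin n → NNReal) with hv₀
  have hv₀V : v₀ ∈ V := (φ ⟨x, hxU⟩).2
  obtain ⟨ε₀, hε₀, hball⟩ := Metric.isOpen_iff.mp hVo v₀ hv₀V
  set F : Finset ℝ := insert ε₀ (Finset.univ.image fun i => if v₀ i = 0 then ε₀ else (v₀ i : ℝ))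
    with hF
  have hFne : F.Nonempty := ⟨ε₀, Finset.mem_insert_self _ _⟩
  set ε : ℝ := F.min' hFne with hε
  have hεmem : ε ∈ F := F.min'_mem hFne
  have hεpos : 0 < ε := by
    rw [hF] at hεmem
    rcases Finset.mem_insert.mp hεmem with h | h
    · rw [h]; exact hε₀
    · obtain ⟨i, _, hi⟩ := Finset.mem_image.mp h
      rw [← hi]
      by_cases h0 : v₀ i = 0
      · rw [if_pos h0]; exact hε₀
      · rw [if_neg h0]
        exact_mod_cast pos_iff_ne_zero.mpr h0
  have hεle : ε ≤ ε₀ := Finset.min'_le _ _ (Finset.mem_insert_self _ _)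
  refine ⟨⟨U, V, φ, hxU, hUo, hVo, hcard, ε, hεpos, ?_, ?_⟩⟩
  · exact fun v hv => hball (Metric.mem_ball.mpr (lt_of_lt_of_le (Metric.mem_ball.mp hv) hεle))
  · intro i hi
    apply Finset.min'_le
    rw [hF]
    refine Finset.mem_insert_of_mem (Finset.mem_image.mpr ⟨i, Finset.mem_univ _, ?_⟩)
    rw [if_neg hi]

namespace BoxAt

variable (B : BoxAt M n c x)

noncomputable def v0 : Fin n → NNReal := (B.φ ⟨x, B.hxU⟩ : Fin n → NNReal)

noncomputable def e : ↥B.V → M := fun v => ((B.φ.symm v : ↥B.U) : M)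

def E (s : Set (Fin n → NNReal)) : Set M := B.e '' (Subtype.val ⁻¹' s)

def W : Set (Fin n → NNReal) := Metric.ball B.v0 B.ε

def UW : Set M := B.E B.W

def Z : Set (Fin n) := {i | B.v0 i = 0}

noncomputable def C (i : Fin n) : Set M := B.E (sl B.v0 B.ε {i})

def Hy (i : Fin n) : Set M := B.E {v ∈ B.W | v i = 0}

lemma e_openEmbedding : Topology.IsOpenEmbedding B.e :=
  (B.hUopen.isOpenEmbedding_subtypeVal).comp B.φ.symm.isOpenEmbedding

lemma e_injective : Function.Injective B.e := B.e_openEmbedding.injective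

lemma range_e : Set.range B.e = B.U := by
  ext z
  constructor
  · rintro ⟨v, rfl⟩
    exact (B.φ.symm v).2
  · intro hz
    refine ⟨B.φ ⟨z, hz⟩, ?_⟩
    show ((B.φ.symm (B.φ ⟨z, hz⟩) : ↥B.U) : M) = z
    rw [B.φ.symm_apply_apply]

lemma mem_E {s : Set (Fin n → NNReal)} {z : M} :
    z ∈ B.E s ↔ ∃ hz : z ∈ B.U, (B.φ ⟨z, hz⟩ : Fin n → NNReal) ∈ s := by
  constructor
  · rintro ⟨v, hv, rfl⟩
    have hzU : B.e v ∈ B.U := by rw [← B.range_e]; exact ⟨v, rfl⟩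
    refine ⟨hzU, ?_⟩
    have : (⟨B.e v, hzU⟩ : ↥B.U) = B.φ.symm v := rfl
    rw [this, B.φ.apply_symm_apply]
    exact hv
  · rintro ⟨hz, hs⟩
    refine ⟨B.φ ⟨z, hz⟩, hs, ?_⟩
    show ((B.φ.symm (B.φ ⟨z, hz⟩) : ↥B.U) : M) = z
    rw [B.φ.symm_apply_apply]

lemma E_mono {s t : Set (Fin n → NNReal)} (h : s ⊆ t) : B.E s ⊆ B.E t :=
  Set.image_mono (Set.preimage_mono h)

lemma c_on_E {s : Set (Fin n → NNReal)} {z : M} (hz : z ∈ B.E s) :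
    ∃ hzU : z ∈ B.U, (B.φ ⟨z, hzU⟩ : Fin n → NNReal) ∈ s ∧
      c z = {i | (B.φ ⟨z, hzU⟩ : Fin n → NNReal) i = 0}.ncard := by
  obtain ⟨hzU, hs⟩ := B.mem_E.mp hz
  exact ⟨hzU, hs, B.hcard ⟨z, hzU⟩⟩

lemma E_open {s : Set (Fin n → NNReal)} (hs : IsOpen s) : IsOpen (B.E s) :=
  B.e_openEmbedding.isOpenMap _ (continuous_subtype_val.isOpen_preimage _ hs)

lemma E_preconnected {s : Set (Fin n → NNReal)} (hs : IsPreconnected s) (hsV : s ⊆ B.V) :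
    IsPreconnected (B.E s) := by
  have h1 : Subtype.val '' (Subtype.val ⁻¹' s : Set ↥B.V) = s := by
    rw [Subtype.image_preimage_coe]
    exact Set.inter_eq_self_of_subset_right hsV
  have h2 : IsPreconnected (Subtype.val ⁻¹' s : Set ↥B.V) := by
    rw [← Topology.IsInducing.subtypeVal.isPreconnected_image, h1]
    exact hs
  exact h2.image _ B.e_openEmbedding.continuous.continuousOn

lemma W_subset_V : B.W ⊆ B.V := B.ball_sub

lemma closure_E_inter {s : Set (Fin n → NNReal)} (hsV : s ⊆ B.V) :
    closure (B.E s) ∩ B.UW = B.E (closure s ∩ B.W) := by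
  ext z
  constructor
  · rintro ⟨hcl, hUW⟩
    obtain ⟨v, hvW, rfl⟩ := hUW
    refine ⟨v, ⟨?_, hvW⟩, rfl⟩
    rw [_root_.mem_closure_iff]
    intro O hO hvO
    have hOp : IsOpen (B.E (O ∩ B.V)) := B.E_open (hO.inter B.hVopen)
    have hzO : B.e v ∈ B.E (O ∩ B.V) := ⟨v, ⟨hvO, v.2⟩, rfl⟩
    obtain ⟨w, hw1, hw2⟩ := _root_.mem_closure_iff.mp hcl _ hOp hzO
    rcases hw1 with ⟨v', hv', hv'e⟩
    rcases hw2 with ⟨v'', hv'', hv''e⟩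
    have hvv : v'' = v' := B.e_injective (hv''e.trans hv'e.symm)
    subst hvv
    exact ⟨v''.1, hv'.1, hv''⟩
  · rintro ⟨v, ⟨hvc, hvW⟩, rfl⟩
    refine ⟨?_, ⟨v, hvW, rfl⟩⟩
    rw [_root_.mem_closure_iff]
    intro O hO hzO
    have hO' : IsOpen (Subtype.val '' (B.e ⁻¹' O) : Set (Fin n → NNReal)) := by
      apply (B.hVopen.isOpenEmbedding_subtypeVal).isOpenMap
      exact B.e_openEmbedding.continuous.isOpen_preimage _ hO
    have hvO' : v.1 ∈ Subtype.val '' (B.e ⁻¹' O) := ⟨v, hzO, rfl⟩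
    obtain ⟨w, hw1, hw2⟩ := _root_.mem_closure_iff.mp hvc _ hO' hvO'
    obtain ⟨v', hv', rfl⟩ := hw1
    exact ⟨B.e v', hv', ⟨v', hw2, rfl⟩⟩

lemma v0_mem_V : B.v0 ∈ B.V := (B.φ ⟨x, B.hxU⟩).2

lemma v0_mem_W : B.v0 ∈ B.W := by
  rw [W, Metric.mem_ball, dist_self]; exact B.εpos

lemma x_eq_e : x = B.e ⟨B.v0, B.v0_mem_V⟩ := by
  show x = ((B.φ.symm (B.φ ⟨x, B.hxU⟩) : ↥B.U) : M)
  rw [B.φ.symm_apply_apply]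

lemma x_mem_UW : x ∈ B.UW := by
  rw [UW]
  refine ⟨⟨B.v0, B.v0_mem_V⟩, B.v0_mem_W, B.x_eq_e.symm⟩

lemma UW_open : IsOpen B.UW := B.E_open Metric.isOpen_ball

lemma UW_subset_U : B.UW ⊆ B.U := by
  rw [UW, E]
  intro z hz
  obtain ⟨v, _, rfl⟩ := hz
  rw [← B.range_e]; exact ⟨v, rfl⟩

lemma zeros_subset_Z {v : Fin n → NNReal} (hv : v ∈ B.W) : {i | v i = 0} ⊆ B.Z := by
  intro i hi
  by_contra hiZ
  have hd : dist (v i) (B.v0 i) < B.ε := by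
    rw [W, Metric.mem_ball] at hv
    exact lt_of_le_of_lt (dist_le_pi_dist v B.v0 i) hv
  rw [mem_setOf_eq] at hi
  rw [hi, NNReal.dist_eq] at hd
  simp only [NNReal.coe_zero, zero_sub, abs_neg] at hd
  rw [abs_of_nonneg (NNReal.coe_nonneg _)] at hd
  exact absurd hd (not_lt.mpr (B.small i (fun h => hiZ h)))

lemma ncard_Z : B.Z.ncard = c x := (B.hcard ⟨x, B.hxU⟩).symm

lemma mem_W_iff {v : Fin n → NNReal} : v ∈ B.W ↔ ∀ j, dist (v j) (B.v0 j) < B.ε := by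
  rw [W, Metric.mem_ball, dist_pi_lt_iff B.εpos]

lemma sl_subset_W {I : Set (Fin n)} : sl B.v0 B.ε I ⊆ B.W :=
  fun v hv => sl_subset_ball B.εpos hv

end BoxAt

end Stmt10Aux
namespace Stmt10Aux
namespace BoxAt
open Set Metric Topology

variable {M : Type*} [TopologicalSpace M] {n : ℕ} {c : M → ℕ} {x : M} (B : BoxAt M n c x)

lemma C_subset_UW (i : Fin n) : B.C i ⊆ B.UW := B.E_mono B.sl_subset_W

lemma P_inter_UW : {y | c y = 1} ∩ B.UW = ⋃ i ∈ B.Z, B.C i := by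
  ext z
  constructor
  · rintro ⟨hz1, hzUW⟩
    obtain ⟨hzU, hvW⟩ := B.mem_E.mp hzUW
    set v : Fin n → NNReal := (B.φ ⟨z, hzU⟩ : Fin n → NNReal) with hv
    have hc : c z = {i | v i = 0}.ncard := B.hcard ⟨z, hzU⟩
    rw [mem_setOf_eq] at hz1
    obtain ⟨a, ha⟩ := Set.ncard_eq_one.mp (hc.symm.trans hz1)
    have haz : a ∈ {i | v i = 0} := by rw [ha]; rfl
    have haZ : a ∈ B.Z := B.zeros_subset_Z hvW haz
    refine Set.mem_iUnion₂.mpr ⟨a, haZ, B.mem_E.mpr ⟨hzU, ?_⟩⟩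
    rw [mem_sl]
    refine ⟨B.mem_W_iff.mp hvW, fun j hj => ?_, fun j hj _ h0 => ?_⟩
    · rw [mem_singleton_iff] at hj; subst hj
      exact haz
    · apply hj
      have : j ∈ {i | v i = 0} := h0
      rw [ha] at this
      exact this
  · intro hz
    obtain ⟨i, hiZ, hzC⟩ := Set.mem_iUnion₂.mp hz
    obtain ⟨hzU, hsl⟩ := B.mem_E.mp hzC
    have hc : c z = {j | (B.φ ⟨z, hzU⟩ : Fin n → NNReal) j = 0}.ncard := B.hcard ⟨z, hzU⟩
    constructor
    · rw [mem_setOf_eq, hc, zeros_of_mem_sl B.small hsl, Set.ncard_singleton]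
    · exact B.mem_E.mpr ⟨hzU, B.sl_subset_W hsl⟩

lemma C_preconnected (i : Fin n) : IsPreconnected (B.C i) :=
  B.E_preconnected (sl_preconnected _ _ _) (subset_trans B.sl_subset_W B.W_subset_V)

lemma C_nonempty {i : Fin n} (hi : i ∈ B.Z) : (B.C i).Nonempty := by
  have hIz : ∀ j ∈ ({i} : Set (Fin n)), B.v0 j = 0 := by
    intro j hj; rw [mem_singleton_iff] at hj; subst hj; exact hi
  obtain ⟨v, hv⟩ := sl_nonempty B.εpos hIz
  exact ⟨B.e ⟨v, B.W_subset_V (B.sl_subset_W hv)⟩, ⟨v, B.W_subset_V (B.sl_subset_W hv)⟩, hv, rfl⟩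

lemma C_subset_P (i : Fin n) : B.C i ⊆ {y | c y = 1} := by
  intro z hz
  obtain ⟨hzU, hsl, hc⟩ := B.c_on_E hz
  rw [mem_setOf_eq, hc, zeros_of_mem_sl B.small hsl, Set.ncard_singleton]

lemma closure_C_inter {i : Fin n} (hi : i ∈ B.Z) : closure (B.C i) ∩ B.UW = B.Hy i := by
  have key : closure (sl B.v0 B.ε {i}) ∩ B.W = {v ∈ B.W | v i = 0} := by
    ext v
    constructor
    · rintro ⟨hc, hW⟩
      refine ⟨hW, ?_⟩
      have hclosed : IsClosed {w : Fin n → NNReal | w i = 0} :=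
        isClosed_singleton.preimage (continuous_apply i)
      have hsub : closure (sl B.v0 B.ε {i}) ⊆ {w | w i = 0} :=
        closure_minimal (fun w hw => (mem_sl.mp hw).2.1 i rfl) hclosed
      exact hsub hc
    · rintro ⟨hW, h0⟩
      refine ⟨?_, hW⟩
      apply sl_mem_closure B.εpos (B.mem_W_iff.mp hW)
      · intro j hj; rw [mem_singleton_iff] at hj; subst hj; exact h0
      · intro j hj; rw [mem_singleton_iff] at hj; subst hj; exact hi
  rw [C, B.closure_E_inter (subset_trans B.sl_subset_W B.W_subset_V), key]
  rfl

lemma x_mem_Hy {i : Fin n} (hi : i ∈ B.Z) : x ∈ B.Hy i :=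
  B.mem_E.mpr ⟨B.hxU, ⟨B.v0_mem_W, hi⟩⟩

noncomputable def Fc (i : Fin n) : Set M := faceOf {y | c y = 1} (B.C i)

lemma Fc_eq {i : Fin n} {z : M} (hz : z ∈ B.C i) :
    B.Fc i = closure (connectedComponentIn {y | c y = 1} z) :=
  faceOf_eq (B.C_preconnected i) (B.C_subset_P i) hz

lemma Fc_mem {i : Fin n} (hi : i ∈ B.Z) : B.Fc i ∈ connFaces M c :=
  faceOf_mem_connFaces (B.C_preconnected i) (B.C_subset_P i) (B.C_nonempty hi)

lemma Hy_subset_Fc {i : Fin n} (hi : i ∈ B.Z) : B.Hy i ⊆ B.Fc i := by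
  rw [← B.closure_C_inter hi]
  exact subset_trans (Set.inter_subset_left)
    (closure_subset_faceOf (B.C_preconnected i) (B.C_subset_P i) (B.C_nonempty hi).some_mem)

lemma x_mem_Fc {i : Fin n} (hi : i ∈ B.Z) : x ∈ B.Fc i := B.Hy_subset_Fc hi (B.x_mem_Hy hi)

lemma C_subset_componentIn {i : Fin n} {z : M} (hz : z ∈ B.C i) :
    B.C i ⊆ connectedComponentIn {y | c y = 1} z :=
  (B.C_preconnected i).subset_connectedComponentIn hz (B.C_subset_P i)

lemma face_meets {A : Set M} (hA : A ∈ connFaces M c) (hne : (A ∩ B.UW).Nonempty) :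
    ∃ i ∈ B.Z, ∃ w ∈ B.C i,
      A = closure (connectedComponentIn {y | c y = 1} w) ∧ A = B.Fc i := by
  obtain ⟨y, hy1, hyA⟩ := hA
  obtain ⟨z, hzA, hzUW⟩ := hne
  rw [hyA] at hzA
  obtain ⟨w, hw1, hw2⟩ := _root_.mem_closure_iff.mp hzA _ B.UW_open hzUW
  have hwP : w ∈ {y | c y = 1} := connectedComponentIn_subset _ _ hw2
  have hwU : w ∈ ⋃ i ∈ B.Z, B.C i := B.P_inter_UW ▸ (⟨hwP, hw1⟩ : w ∈ {y | c y = 1} ∩ B.UW)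
  obtain ⟨i, hiZ, hwC⟩ := Set.mem_iUnion₂.mp hwU
  have hcomp : connectedComponentIn {y | c y = 1} y = connectedComponentIn {y | c y = 1} w :=
    connectedComponentIn_eq hw2
  refine ⟨i, hiZ, w, hwC, by rw [hyA, hcomp], ?_⟩
  rw [B.Fc_eq hwC, hyA, hcomp]

lemma Fc_injOn (h2 : ∀ x : M, {A | A ∈ connFaces M c ∧ x ∈ A}.ncard = c x) :
    Set.InjOn B.Fc B.Z := by
  have himg : {A | A ∈ connFaces M c ∧ x ∈ A} = B.Fc '' B.Z := by
    ext A
    constructor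
    · rintro ⟨hA, hxA⟩
      obtain ⟨i, hi, w, hw, _, hAF⟩ := B.face_meets hA ⟨x, hxA, B.x_mem_UW⟩
      exact ⟨i, hi, hAF.symm⟩
    · rintro ⟨i, hi, rfl⟩
      exact ⟨B.Fc_mem hi, B.x_mem_Fc hi⟩
  exact Set.injOn_of_ncard_image_eq (by rw [← himg, h2 x, B.ncard_Z]) (Set.toFinite _)

lemma face_inter_UW (h2 : ∀ x : M, {A | A ∈ connFaces M c ∧ x ∈ A}.ncard = c x)
    {A : Set M} (hA : A ∈ connFaces M c) (hne : (A ∩ B.UW).Nonempty) :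
    ∃ i ∈ B.Z, A = B.Fc i ∧ A ∩ B.UW = B.Hy i := by
  obtain ⟨i, hi, w, hwC, hAw, hAF⟩ := B.face_meets hA hne
  refine ⟨i, hi, hAF, ?_⟩
  have hDU : connectedComponentIn {y | c y = 1} w ∩ B.UW = B.C i := by
    apply Set.Subset.antisymm
    · rintro u ⟨hu1, hu2⟩
      have huP : u ∈ {y | c y = 1} := connectedComponentIn_subset _ _ hu1
      have huU : u ∈ ⋃ j ∈ B.Z, B.C j := by
        have h' : u ∈ {y | c y = 1} ∩ B.UW := ⟨huP, hu2⟩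
        rwa [B.P_inter_UW] at h' 
      obtain ⟨j, hjZ, hujC⟩ := Set.mem_iUnion₂.mp huU
      have hcomp : connectedComponentIn {y | c y = 1} w
          = connectedComponentIn {y | c y = 1} u := connectedComponentIn_eq hu1
      have hji : j = i := by
        apply B.Fc_injOn h2 hjZ hi
        rw [B.Fc_eq hujC, ← hcomp, ← B.Fc_eq hwC]
      exact hji ▸ hujC
    · exact Set.subset_inter (B.C_subset_componentIn hwC) (B.C_subset_UW i)
  apply Set.Subset.antisymm
  · rintro z ⟨hzA, hzUW⟩
    rw [hAw] at hzA
    have hz2 : z ∈ B.UW ∩ closure (connectedComponentIn {y | c y = 1} w) := ⟨hzUW, hzA⟩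
    have := B.UW_open.inter_closure hz2
    rw [Set.inter_comm, hDU] at this
    rw [← B.closure_C_inter hi]
    exact ⟨this, hzUW⟩
  · rw [← B.closure_C_inter hi, hAw]
    exact Set.inter_subset_inter_left _ (closure_mono (B.C_subset_componentIn hwC))

include B in
lemma depth_pos {A : Set M} (hA : A ∈ connFaces M c) (hxA : x ∈ A) : 1 ≤ c x := by
  by_contra h
  push_neg at h
  have hc0 : c x = 0 := Nat.lt_one_iff.mp h
  have hZ : B.Z = ∅ := by
    have := B.ncard_Z
    rw [hc0] at this
    exact (Set.ncard_eq_zero (Set.toFinite _)).mp this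
  obtain ⟨i, hi, _⟩ := B.face_meets hA ⟨x, hxA, B.x_mem_UW⟩
  rw [hZ] at hi
  exact hi

lemma clop (h2 : ∀ x : M, {A | A ∈ connFaces M c ∧ x ∈ A}.ncard = c x) (hx2 : c x = 2)
    {A : Set M} (hA : A ∈ connFaces M c) :
    {z | c z = 2} ∩ B.UW ⊆ A ∨ A ∩ B.UW = ∅ := by
  by_cases hne : (A ∩ B.UW).Nonempty
  · left
    obtain ⟨i, hi, hAF, hAU⟩ := B.face_inter_UW h2 hA hne
    rintro z ⟨hz2, hzUW⟩
    obtain ⟨hzU, hvW⟩ := B.mem_E.mp hzUW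
    set v : Fin n → NNReal := (B.φ ⟨z, hzU⟩ : Fin n → NNReal) with hv
    have hzeros : {j | v j = 0} = B.Z := by
      have hcz : {j | v j = 0}.ncard = 2 := by
        have h' : c z = {j | v j = 0}.ncard := B.hcard ⟨z, hzU⟩
        rw [mem_setOf_eq] at hz2
        rw [← h', hz2]
      exact Set.eq_of_subset_of_ncard_le (B.zeros_subset_Z hvW)
        (by rw [B.ncard_Z, hx2, hcz]) (Set.toFinite _)
    have hvi : v i = 0 := by
      have : i ∈ {j | v j = 0} := hzeros ▸ hi
      exact this
    have : z ∈ B.Hy i := B.mem_E.mpr ⟨hzU, ⟨hvW, hvi⟩⟩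
    rw [← hAU] at this
    exact this.1
  · right
    rwa [Set.not_nonempty_iff_eq_empty] at hne

end BoxAt
end Stmt10Aux
namespace Stmt10Aux
open Set Metric Topology

variable {M : Type*} [TopologicalSpace M] {n : ℕ} {c : M → ℕ}

/-- connected subsets of the codimension-2 stratum stay in any face they touch -/
lemma cc_subset
    (h1 : ∀ x : M, ∃ (U : Set M) (V : Set (Fin n → NNReal)) (φ : ↥U ≃ₜ ↥V),
      x ∈ U ∧ IsOpen U ∧ IsOpen V ∧
      ∀ y : U, c y.1 = {i | (φ y : Fin n → NNReal) i = 0}.ncard)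
    (h2 : ∀ x : M, {A | A ∈ connFaces M c ∧ x ∈ A}.ncard = c x)
    {t : Set M} (ht : IsPreconnected t) (ht2 : t ⊆ {z | c z = 2})
    {A : Set M} (hA : A ∈ connFaces M c) (hne : (t ∩ A).Nonempty) : t ⊆ A := by
  classical
  have hbox : ∀ y : {z : M | c z = 2}, ∃ O : Set M, IsOpen O ∧ y.1 ∈ O ∧
      ({z | c z = 2} ∩ O ⊆ A ∨ A ∩ O = ∅) := by
    rintro ⟨y, hy⟩
    obtain ⟨B⟩ := boxAt_nonempty h1 y
    exact ⟨B.UW, B.UW_open, B.x_mem_UW, B.clop h2 hy hA⟩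
  choose O hO1 hO2 hO3 using hbox
  set u : Set M := ⋃ (y : {z : M | c z = 2}) (_ : {z | c z = 2} ∩ O y ⊆ A), O y with hu
  set v : Set M := ⋃ (y : {z : M | c z = 2}) (_ : A ∩ O y = ∅), O y with hv
  have huo : IsOpen u := isOpen_iUnion fun y => isOpen_iUnion fun _ => hO1 y
  have hvo : IsOpen v := isOpen_iUnion fun y => isOpen_iUnion fun _ => hO1 y
  have hcover : t ⊆ u ∪ v := by
    intro z hz
    rcases hO3 ⟨z, ht2 hz⟩ with h | h
    · exact Or.inl (Set.mem_iUnion₂.mpr ⟨⟨z, ht2 hz⟩, h, hO2 _⟩)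
    · exact Or.inr (Set.mem_iUnion₂.mpr ⟨⟨z, ht2 hz⟩, h, hO2 _⟩)
  have hdisj : ¬(t ∩ (u ∩ v)).Nonempty := by
    rintro ⟨z, hzt, hzu, hzv⟩
    obtain ⟨y1, hy1, hzO1⟩ := Set.mem_iUnion₂.mp hzu
    obtain ⟨y2, hy2, hzO2⟩ := Set.mem_iUnion₂.mp hzv
    have hzA : z ∈ A := hy1 ⟨ht2 hzt, hzO1⟩
    have : z ∈ A ∩ O y2 := ⟨hzA, hzO2⟩
    rw [hy2] at this
    exact this
  have htu : (t ∩ u).Nonempty := by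
    obtain ⟨w, hwt, hwA⟩ := hne
    rcases hcover hwt with h | h
    · exact ⟨w, hwt, h⟩
    · exfalso
      obtain ⟨y2, hy2, hwO⟩ := Set.mem_iUnion₂.mp h
      have : w ∈ A ∩ O y2 := ⟨hwA, hwO⟩
      rw [hy2] at this
      exact this
  have htv : ¬(t ∩ v).Nonempty := fun h => hdisj (ht u v huo hvo hcover htu h)
  intro z hz
  rcases hcover hz with h | h
  · obtain ⟨y1, hy1, hzO⟩ := Set.mem_iUnion₂.mp h
    exact hy1 ⟨ht2 hz, hzO⟩
  · exact absurd ⟨z, hz, h⟩ htv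

/-- identification of the disjoint union of faces near a point of it -/
lemma N_inter_UW
    (h2 : ∀ x : M, {A | A ∈ connFaces M c ∧ x ∈ A}.ncard = c x)
    {S : Set (Set M)} (hS : S ⊆ connFaces M c) (hdisj : S.Pairwise Disjoint)
    {x : M} {A₀ : Set M} (hA₀S : A₀ ∈ S) (hxA₀ : x ∈ A₀) (B : BoxAt M n c x) :
    ∃ i₀ ∈ B.Z, A₀ = B.Fc i₀ ∧ (⋃₀ S) ∩ B.UW = B.Hy i₀ := by
  obtain ⟨i₀, hi₀, hAF, hAU⟩ := B.face_inter_UW h2 (hS hA₀S) ⟨x, hxA₀, B.x_mem_UW⟩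
  refine ⟨i₀, hi₀, hAF, ?_⟩
  rw [← hAU]
  apply Set.Subset.antisymm
  · rintro z ⟨hzN, hzUW⟩
    obtain ⟨A', hA'S, hzA'⟩ := hzN
    obtain ⟨i', hi', hA'F, hA'U⟩ := B.face_inter_UW h2 (hS hA'S) ⟨z, hzA', hzUW⟩
    have hxA' : x ∈ A' := by rw [hA'F]; exact B.x_mem_Fc hi'
    have : A' = A₀ := by
      by_contra hne
      exact Set.disjoint_left.mp (hdisj hA'S hA₀S hne) hxA' hxA₀
    exact ⟨this ▸ hzA', hzUW⟩
  · intro z hz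
    exact ⟨⟨A₀, hA₀S, hz.1⟩, hz.2⟩

end Stmt10Aux
namespace Stmt10Aux
open Set Metric Topology

namespace BoxAt

variable {M : Type*} [TopologicalSpace M] {n : ℕ} {c : M → ℕ} {x : M} (B : BoxAt M n c x)

lemma mem_Hy_iff {i : Fin n} {z : M} :
    z ∈ B.Hy i ↔ ∃ hz : z ∈ B.U,
      (B.φ ⟨z, hz⟩ : Fin n → NNReal) ∈ B.W ∧ (B.φ ⟨z, hz⟩ : Fin n → NNReal) i = 0 := by
  rw [Hy, mem_E]
  exact exists_congr fun hz => Iff.rfl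

end BoxAt

lemma chartN {M : Type*} [TopologicalSpace M] {m : ℕ} {c : M → ℕ} {x : M} (N : Set M)
    (B : BoxAt M (m + 1) c x) (hxN : x ∈ N) (i₀ : Fin (m + 1))
    (hNU : N ∩ B.UW = B.Hy i₀) :
    ∃ (U : Set ↥N) (V : Set (Fin m → NNReal)) (φ : ↥U ≃ₜ ↥V),
      (⟨x, hxN⟩ : ↥N) ∈ U ∧ IsOpen U ∧ IsOpen V ∧
      ∀ y : ↥U, c (y.1 : ↥N).1 - 1 = {i | (φ y : Fin m → NNReal) i = 0}.ncard := by
  set ins : (Fin m → NNReal) → (Fin (m + 1) → NNReal) := fun w => i₀.insertNth 0 w with hins_def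
  have hins : Continuous ins := Continuous.finInsertNth i₀ continuous_const continuous_id
  set UN : Set ↥N := Subtype.val ⁻¹' B.UW with hUN_def
  set VN : Set (Fin m → NNReal) := ins ⁻¹' B.W with hVN_def
  have hyU : ∀ y : ↥UN, (y.1 : ↥N).1 ∈ B.U := fun y => B.UW_subset_U y.2
  have hyHy : ∀ y : ↥UN, (y.1 : ↥N).1 ∈ B.Hy i₀ := by
    intro y
    have h' : (y.1 : ↥N).1 ∈ N ∩ B.UW := ⟨(y.1 : ↥N).2, y.2⟩
    rwa [hNU] at h'
  have hHyN : B.Hy i₀ ⊆ N := by rw [← hNU]; exact Set.inter_subset_left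
  -- key facts about the chart vector of a point of UN
  have hkey : ∀ y : ↥UN, (B.φ ⟨(y.1 : ↥N).1, hyU y⟩ : Fin (m + 1) → NNReal) ∈ B.W ∧
      (B.φ ⟨(y.1 : ↥N).1, hyU y⟩ : Fin (m + 1) → NNReal) i₀ = 0 := by
    intro y
    obtain ⟨hz, hW, h0⟩ := B.mem_Hy_iff.mp (hyHy y)
    exact ⟨hW, h0⟩
  have hFmem : ∀ y : ↥UN,
      ins (Fin.removeNth i₀ (B.φ ⟨(y.1 : ↥N).1, hyU y⟩ : Fin (m + 1) → NNReal)) ∈ B.W := by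
    intro y
    obtain ⟨hW, h0⟩ := hkey y
    show i₀.insertNth 0 (Fin.removeNth i₀ _) ∈ B.W
    rw [← h0, Fin.insertNth_self_removeNth]
    exact hW
  have hinsV : ∀ w : ↥VN, ins w.1 ∈ B.V := fun w => B.W_subset_V w.2
  have hGUW : ∀ w : ↥VN, B.e ⟨ins w.1, hinsV w⟩ ∈ B.UW := fun w => ⟨⟨ins w.1, hinsV w⟩, w.2, rfl⟩
  have hGN : ∀ w : ↥VN, B.e ⟨ins w.1, hinsV w⟩ ∈ N := by
    intro w
    apply hHyN
    refine ⟨⟨ins w.1, hinsV w⟩, ⟨w.2, ?_⟩, rfl⟩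
    exact Fin.insertNth_apply_same (α := fun _ => NNReal) i₀ 0 w.1
  set F : ↥UN → ↥VN :=
    fun y => ⟨Fin.removeNth i₀ (B.φ ⟨(y.1 : ↥N).1, hyU y⟩ : Fin (m + 1) → NNReal), hFmem y⟩
    with hF_def
  set G : ↥VN → ↥UN := fun w => ⟨⟨B.e ⟨ins w.1, hinsV w⟩, hGN w⟩, hGUW w⟩ with hG_def
  have hGF : Function.LeftInverse G F := by
    intro y
    apply Subtype.ext
    apply Subtype.ext
    show B.e ⟨ins (F y).1, hinsV (F y)⟩ = (y.1 : ↥N).1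
    have hv : ins (F y).1 = (B.φ ⟨(y.1 : ↥N).1, hyU y⟩ : Fin (m + 1) → NNReal) := by
      show i₀.insertNth 0 (Fin.removeNth i₀ _) = _
      rw [← (hkey y).2, Fin.insertNth_self_removeNth]
    have hsub : (⟨ins (F y).1, hinsV (F y)⟩ : ↥B.V) = B.φ ⟨(y.1 : ↥N).1, hyU y⟩ :=
      Subtype.ext hv
    show ((B.φ.symm ⟨ins (F y).1, hinsV (F y)⟩ : ↥B.U) : M) = (y.1 : ↥N).1
    rw [hsub, B.φ.symm_apply_apply]
  have hFG : Function.RightInverse G F := by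
    intro w
    apply Subtype.ext
    show Fin.removeNth i₀ (B.φ ⟨(G w).1.1, hyU (G w)⟩ : Fin (m + 1) → NNReal) = w.1
    have hsub : (⟨(G w).1.1, hyU (G w)⟩ : ↥B.U) = B.φ.symm ⟨ins w.1, hinsV w⟩ :=
      Subtype.ext rfl
    rw [hsub, B.φ.apply_symm_apply]
    exact Fin.removeNth_insertNth (α := fun _ => NNReal) i₀ 0 w.1
  have hφval : Continuous fun y : ↥UN => (B.φ ⟨(y.1 : ↥N).1, hyU y⟩ : Fin (m + 1) → NNReal) := by
    apply continuous_subtype_val.comp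
    apply B.φ.continuous.comp
    exact Continuous.subtype_mk (continuous_subtype_val.comp continuous_subtype_val) _
  have hFcont : Continuous F := by
    apply Continuous.subtype_mk
    exact continuous_pi fun j => (continuous_apply (i₀.succAbove j)).comp hφval
  have hGcont : Continuous G := by
    apply Continuous.subtype_mk
    apply Continuous.subtype_mk
    exact B.e_openEmbedding.continuous.comp
      (Continuous.subtype_mk (hins.comp continuous_subtype_val) _)
  refine ⟨UN, VN, ⟨⟨F, G, hGF, hFG⟩, hFcont, hGcont⟩, ?_, ?_, ?_, ?_⟩
  · exact B.x_mem_UW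
  · exact B.UW_open.preimage continuous_subtype_val
  · exact IsOpen.preimage hins Metric.isOpen_ball
  · intro y
    set v : Fin (m + 1) → NNReal := (B.φ ⟨(y.1 : ↥N).1, hyU y⟩ : Fin (m + 1) → NNReal)
      with hv_def
    have h0 : v i₀ = 0 := (hkey y).2
    have hc : c (y.1 : ↥N).1 = {i | v i = 0}.ncard := B.hcard ⟨(y.1 : ↥N).1, hyU y⟩
    have hset : {i | v i = 0} = insert i₀ (i₀.succAbove '' {j | v (i₀.succAbove j) = 0}) := by
      ext i
      simp only [mem_setOf_eq, Set.mem_insert_iff, Set.mem_image]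
      constructor
      · intro hvi
        by_cases hii : i = i₀
        · exact Or.inl hii
        · right
          have hr : i ∈ Set.range i₀.succAbove := by
            rw [Fin.range_succAbove]; exact hii
          obtain ⟨j, rfl⟩ := hr
          exact ⟨j, hvi, rfl⟩
      · rintro (rfl | ⟨j, hj, rfl⟩)
        · exact h0
        · exact hj
    have hnotmem : i₀ ∉ i₀.succAbove '' {j | v (i₀.succAbove j) = 0} := by
      rintro ⟨j, -, hj⟩
      exact Fin.succAbove_ne i₀ j hj
    have hcount : {i | v i = 0}.ncard = {j | v (i₀.succAbove j) = 0}.ncard + 1 := by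
      rw [hset, Set.ncard_insert_of_notMem hnotmem (Set.toFinite _),
        Set.ncard_image_of_injective _ Fin.succAbove_right_injective]
    show c (y.1 : ↥N).1 - 1 = _
    rw [hc, hcount]
    exact Nat.add_sub_cancel _ _

end Stmt10Aux
namespace Stmt10Aux
open Set Metric Topology

lemma isClosed_faceOf {X : Type*} [TopologicalSpace X] (P s : Set X) :
    IsClosed (faceOf P s) := by
  rw [faceOf]
  split
  · exact isClosed_closure
  · exact isClosed_empty

lemma countN {M : Type*} [TopologicalSpace M] {n : ℕ} {c : M → ℕ}
    (h1 : ∀ x : M, ∃ (U : Set M) (V : Set (Fin n → NNReal)) (φ : ↥U ≃ₜ ↥V),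
      x ∈ U ∧ IsOpen U ∧ IsOpen V ∧
      ∀ y : U, c y.1 = {i | (φ y : Fin n → NNReal) i = 0}.ncard)
    (h2 : ∀ x : M, {A | A ∈ connFaces M c ∧ x ∈ A}.ncard = c x)
    {S : Set (Set M)} (hS : S ⊆ connFaces M c) (hdisj : S.Pairwise Disjoint)
    {x : M} (hxN : x ∈ ⋃₀ S) :
    {A | A ∈ connFaces (↥(⋃₀ S)) (fun y => c y.1 - 1) ∧ (⟨x, hxN⟩ : ↥(⋃₀ S)) ∈ A}.ncard
      = c x - 1 := by
  classical
  obtain ⟨A₀, hA₀S, hxA₀⟩ := hxN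
  obtain ⟨B⟩ := boxAt_nonempty h1 x
  obtain ⟨i₀, hi₀, hA₀F, hNU⟩ := N_inter_UW h2 hS hdisj hA₀S hxA₀ B
  set N : Set M := ⋃₀ S with hN_def
  set P' : Set ↥N := {y : ↥N | c y.1 - 1 = 1} with hP'_def
  have hP'2 : ∀ y : ↥N, y ∈ P' ↔ c y.1 = 2 := by
    intro y
    simp only [hP'_def, mem_setOf_eq]
    omega
  have hHyN : ∀ i, i ∈ B.Z → B.Hy i ⊆ B.Fc i := fun i hi => B.Hy_subset_Fc hi
  have hHy₀N : B.Hy i₀ ⊆ N := by rw [← hNU]; exact Set.inter_subset_left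
  -- the double slices
  set s2 : Fin n → Set (Fin n → NNReal) := fun j => sl B.v0 B.ε {i₀, j} with hs2_def
  have hs2V : ∀ j, s2 j ⊆ B.V := fun j => subset_trans B.sl_subset_W B.W_subset_V
  have hE2Hy : ∀ j, B.E (s2 j) ⊆ B.Hy i₀ := by
    intro j z hz
    obtain ⟨hzU, hsl⟩ := B.mem_E.mp hz
    refine B.mem_E.mpr ⟨hzU, ⟨B.sl_subset_W hsl, ?_⟩⟩
    exact (mem_sl.mp hsl).2.1 i₀ (Set.mem_insert _ _)
  have hE2Hyj : ∀ j, B.E (s2 j) ⊆ B.Hy j := by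
    intro j z hz
    obtain ⟨hzU, hsl⟩ := B.mem_E.mp hz
    refine B.mem_E.mpr ⟨hzU, ⟨B.sl_subset_W hsl, ?_⟩⟩
    exact (mem_sl.mp hsl).2.1 j (Set.mem_insert_iff.mpr (Or.inr rfl))
  have hE2N : ∀ j, B.E (s2 j) ⊆ N := fun j => subset_trans (hE2Hy j) hHy₀N
  set C2 : Fin n → Set ↥N := fun j => Subtype.val ⁻¹' (B.E (s2 j)) with hC2_def
  have hval : ∀ j, Subtype.val '' (C2 j) = B.E (s2 j) := by
    intro j
    rw [hC2_def]
    rw [Subtype.image_preimage_coe]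
    exact Set.inter_eq_self_of_subset_right (hE2N j)
  have hC2pre : ∀ j, IsPreconnected (C2 j) := by
    intro j
    rw [← Topology.IsInducing.subtypeVal.isPreconnected_image, hval j]
    exact B.E_preconnected (sl_preconnected _ _ _) (hs2V j)
  have hzeros2 : ∀ j, j ≠ i₀ → ∀ z ∈ B.E (s2 j), c z = 2 := by
    intro j hj z hz
    obtain ⟨hzU, hsl, hc⟩ := B.c_on_E hz
    rw [hc, zeros_of_mem_sl B.small hsl, Set.ncard_pair (Ne.symm hj)]
  have hC2P' : ∀ j, j ≠ i₀ → C2 j ⊆ P' := by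
    intro j hj y hy
    rw [hP'2]
    exact hzeros2 j hj y.1 hy
  have hC2ne : ∀ j, j ∈ B.Z → (C2 j).Nonempty := by
    intro j hjZ
    have hIz : ∀ l ∈ ({i₀, j} : Set (Fin n)), B.v0 l = 0 := by
      intro l hl
      rcases hl with rfl | hl
      · exact hi₀
      · rw [mem_singleton_iff] at hl; subst hl; exact hjZ
    obtain ⟨v, hv⟩ := sl_nonempty B.εpos hIz
    have hvV : v ∈ B.V := (hs2V j) hv
    have hzE : B.e ⟨v, hvV⟩ ∈ B.E (s2 j) := ⟨⟨v, hvV⟩, hv, rfl⟩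
    exact ⟨⟨B.e ⟨v, hvV⟩, hE2N j hzE⟩, hzE⟩
  have hC2UW : ∀ j, C2 j ⊆ Subtype.val ⁻¹' B.UW := by
    intro j y hy
    exact B.E_mono B.sl_subset_W hy
  -- decomposition of the stratum of N near x
  have hdecomp : P' ∩ (Subtype.val ⁻¹' B.UW) = ⋃ j ∈ B.Z \ {i₀}, C2 j := by
    ext y
    constructor
    · rintro ⟨hyP, hyUW⟩
      have hy2 : c y.1 = 2 := (hP'2 y).mp hyP
      have hyHy : y.1 ∈ B.Hy i₀ := by
        have h' : y.1 ∈ N ∩ B.UW := ⟨y.2, hyUW⟩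
        rwa [hNU] at h'
      obtain ⟨hzU, hW, h0⟩ := B.mem_Hy_iff.mp hyHy
      set v : Fin n → NNReal := (B.φ ⟨y.1, hzU⟩ : Fin n → NNReal) with hv_def
      have hc : {i | v i = 0}.ncard = 2 := by
        have h' := B.hcard ⟨y.1, hzU⟩
        rw [← h', hy2]
      obtain ⟨a, b, hab, hset⟩ := Set.ncard_eq_two.mp hc
      have hi₀mem : i₀ ∈ ({a, b} : Set (Fin n)) := hset ▸ h0
      -- j := the other element
      have hswap : ∃ j, j ≠ i₀ ∧ ({i₀, j} : Set (Fin n)) = {a, b} := by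
        rcases hi₀mem with rfl | hb
        · exact ⟨b, fun h => hab h.symm, rfl⟩
        · rw [mem_singleton_iff] at hb
          subst hb
          exact ⟨a, fun h => hab h, by rw [Set.pair_comm]⟩
      obtain ⟨j, hji₀, hpair⟩ := hswap
      have hzeros : {i | v i = 0} = {i₀, j} := by rw [hset, ← hpair]
      have hjZ : j ∈ B.Z := B.zeros_subset_Z hW (by rw [hzeros]; exact Set.mem_insert_iff.mpr (Or.inr rfl))
      refine Set.mem_iUnion₂.mpr ⟨j, ⟨hjZ, hji₀⟩, ?_⟩
      refine B.mem_E.mpr ⟨hzU, ?_⟩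
      rw [mem_sl]
      refine ⟨B.mem_W_iff.mp hW, fun l hl => ?_, fun l hl _ hl0 => ?_⟩
      · have : l ∈ {i | v i = 0} := by rw [hzeros]; exact hl
        exact this
      · apply hl
        have : l ∈ {i | v i = 0} := hl0
        rw [hzeros] at this
        exact this
    · intro hy
      obtain ⟨j, hj, hyC⟩ := Set.mem_iUnion₂.mp hy
      exact ⟨hC2P' j hj.2 hyC, hC2UW j hyC⟩
  -- x as an element of N
  set x' : ↥N := ⟨x, ⟨A₀, hA₀S, hxA₀⟩⟩ with hx'_def
  have hx'UW : x' ∈ (Subtype.val ⁻¹' B.UW : Set ↥N) := B.x_mem_UW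
  have hx'cl : ∀ j ∈ B.Z, x' ∈ closure (C2 j) := by
    intro j hjZ
    rw [closure_subtype, hval j]
    have hIz : ∀ l ∈ ({i₀, j} : Set (Fin n)), B.v0 l = 0 := by
      intro l hl
      rcases hl with rfl | hl
      · exact hi₀
      · rw [mem_singleton_iff] at hl; subst hl; exact hjZ
    have hv0cl : B.v0 ∈ closure (s2 j) ∩ B.W := by
      refine ⟨sl_mem_closure B.εpos (fun l => by rw [dist_self]; exact B.εpos) ?_ hIz, B.v0_mem_W⟩
      exact fun l hl => hIz l hl
    have hmem : x ∈ B.E (closure (s2 j) ∩ B.W) :=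
      ⟨⟨B.v0, B.v0_mem_V⟩, hv0cl, B.x_eq_e.symm⟩
    rw [← B.closure_E_inter (hs2V j)] at hmem
    exact hmem.1
  -- the faces of N through x'
  set Fc2 : Fin n → Set ↥N := fun j => faceOf P' (C2 j) with hFc2_def
  have hFc2mem : ∀ j, j ∈ B.Z → j ≠ i₀ → Fc2 j ∈ connFaces ↥N (fun y => c y.1 - 1) :=
    fun j hjZ hji₀ =>
      faceOf_mem_connFaces (hC2pre j) (hC2P' j hji₀) (hC2ne j hjZ)
  have hx'Fc2 : ∀ j, j ∈ B.Z → j ≠ i₀ → x' ∈ Fc2 j := by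
    intro j hjZ hji₀
    exact closure_subset_faceOf (hC2pre j) (hC2P' j hji₀) (hC2ne j hjZ).some_mem (hx'cl j hjZ)
  -- surjectivity
  have hsurj : ∀ Bf, Bf ∈ connFaces ↥N (fun y => c y.1 - 1) → x' ∈ Bf →
      ∃ j ∈ B.Z \ {i₀}, Bf = Fc2 j := by
    rintro Bf ⟨w, hw1, hwB⟩ hx'B
    rw [hwB] at hx'B
    have hUNopen : IsOpen (Subtype.val ⁻¹' B.UW : Set ↥N) :=
      B.UW_open.preimage continuous_subtype_val
    obtain ⟨z, hz1, hz2⟩ := _root_.mem_closure_iff.mp hx'B _ hUNopen hx'UW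
    have hzP' : z ∈ P' := connectedComponentIn_subset _ _ hz2
    have hzdec : z ∈ ⋃ j ∈ B.Z \ {i₀}, C2 j := by
      rw [← hdecomp]; exact ⟨hzP', hz1⟩
    obtain ⟨j, hj, hzC⟩ := Set.mem_iUnion₂.mp hzdec
    refine ⟨j, hj, ?_⟩
    rw [hwB, connectedComponentIn_eq hz2, ← faceOf_eq (hC2pre j) (hC2P' j hj.2) hzC]
  -- injectivity
  have hFcsub : ∀ j, j ∈ B.Z → j ≠ i₀ → Fc2 j ⊆ Subtype.val ⁻¹' (B.Fc j) := by
    intro j hjZ hji₀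
    set z0 : ↥N := (hC2ne j hjZ).some with hz0_def
    have hz0C : z0 ∈ C2 j := (hC2ne j hjZ).some_mem
    have hz0P' : z0 ∈ P' := hC2P' j hji₀ hz0C
    set T : Set ↥N := connectedComponentIn P' z0 with hT_def
    have hT1 : IsPreconnected (Subtype.val '' T) :=
      (isPreconnected_connectedComponentIn).image _ continuous_subtype_val.continuousOn
    have hT2 : Subtype.val '' T ⊆ {z | c z = 2} := by
      rintro _ ⟨y, hy, rfl⟩
      exact (hP'2 y).mp (connectedComponentIn_subset _ _ hy)
    have hT3 : (Subtype.val '' T ∩ B.Fc j).Nonempty := by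
      refine ⟨z0.1, ⟨z0, mem_connectedComponentIn hz0P', rfl⟩, ?_⟩
      exact hHyN j hjZ (hE2Hyj j (by rw [← hval j]; exact ⟨z0, hz0C, rfl⟩))
    have hTsub : Subtype.val '' T ⊆ B.Fc j :=
      cc_subset h1 h2 hT1 hT2 (B.Fc_mem hjZ) hT3
    have hTsub' : T ⊆ Subtype.val ⁻¹' (B.Fc j) := fun y hy => hTsub ⟨y, hy, rfl⟩
    have hFc2eq : Fc2 j = closure T :=
      faceOf_eq (hC2pre j) (hC2P' j hji₀) hz0C ▸ rfl
    calc Fc2 j = closure T := by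
          rw [hFc2_def]
          exact faceOf_eq (hC2pre j) (hC2P' j hji₀) ((hC2ne j hjZ).some_mem)
      _ ⊆ Subtype.val ⁻¹' (B.Fc j) := closure_minimal hTsub'
          (IsClosed.preimage continuous_subtype_val (isClosed_faceOf _ _))
  have hC2inFc2 : ∀ j, j ∈ B.Z → j ≠ i₀ → C2 j ⊆ Fc2 j := by
    intro j hjZ hji₀
    refine subset_trans subset_closure
      (closure_subset_faceOf (hC2pre j) (hC2P' j hji₀) (hC2ne j hjZ).some_mem)
  have hinj : Set.InjOn Fc2 (B.Z \ {i₀}) := by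
    rintro j ⟨hjZ, hji₀⟩ l ⟨hlZ, hli₀⟩ hjl
    rw [mem_singleton_iff] at hji₀ hli₀
    by_contra hne
    -- the chosen point of C2 l lies in three distinct faces of M
    set z0 : ↥N := (hC2ne l hlZ).some with hz0_def
    have hz0C : z0 ∈ C2 l := (hC2ne l hlZ).some_mem
    have hz0Fc2l : z0 ∈ Fc2 l := hC2inFc2 l hlZ hli₀ hz0C
    have hz0Fcj : z0.1 ∈ B.Fc j := hFcsub j hjZ hji₀ (hjl ▸ hz0Fc2l)
    have hz0Fcl : z0.1 ∈ B.Fc l :=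
      hHyN l hlZ (hE2Hyj l (by rw [← hval l]; exact ⟨z0, hz0C, rfl⟩))
    have hz0Fci₀ : z0.1 ∈ B.Fc i₀ :=
      hHyN i₀ hi₀ (hE2Hy l (by rw [← hval l]; exact ⟨z0, hz0C, rfl⟩))
    have hz02 : c z0.1 = 2 := (hP'2 z0).mp (hC2P' l hli₀ hz0C)
    have hfaces : {A | A ∈ connFaces M c ∧ z0.1 ∈ A}.ncard = 2 := by
      rw [h2 z0.1, hz02]
    have hfin : {A | A ∈ connFaces M c ∧ z0.1 ∈ A}.Finite := by
      apply Set.finite_of_ncard_ne_zero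
      rw [hfaces]
      omega
    have htriple : ({B.Fc i₀, B.Fc j, B.Fc l} : Set (Set M)) ⊆
        {A | A ∈ connFaces M c ∧ z0.1 ∈ A} := by
      rintro A (rfl | rfl | rfl)
      · exact ⟨B.Fc_mem hi₀, hz0Fci₀⟩
      · exact ⟨B.Fc_mem hjZ, hz0Fcj⟩
      · exact ⟨B.Fc_mem hlZ, hz0Fcl⟩
    have hdist : ({B.Fc i₀, B.Fc j, B.Fc l} : Set (Set M)).ncard = 3 := by
      apply Set.ncard_eq_three.mpr
      refine ⟨B.Fc i₀, B.Fc j, B.Fc l, ?_, ?_, ?_, rfl⟩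
      · exact fun h => hji₀ (B.Fc_injOn h2 hjZ hi₀ h.symm)
      · exact fun h => hli₀ (B.Fc_injOn h2 hlZ hi₀ h.symm)
      · exact fun h => hne (B.Fc_injOn h2 hjZ hlZ h)
    have hle := Set.ncard_le_ncard htriple hfin
    rw [hdist, hfaces] at hle
    omega
  -- conclusion
  have hsetEq : {A | A ∈ connFaces ↥N (fun y => c y.1 - 1) ∧ x' ∈ A} = Fc2 '' (B.Z \ {i₀}) := by
    ext Bf
    constructor
    · rintro ⟨hBf, hx'Bf⟩
      obtain ⟨j, hj, rfl⟩ := hsurj Bf hBf hx'Bf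
      exact ⟨j, hj, rfl⟩
    · rintro ⟨j, ⟨hjZ, hji₀⟩, rfl⟩
      rw [mem_singleton_iff] at hji₀
      exact ⟨hFc2mem j hjZ hji₀, hx'Fc2 j hjZ hji₀⟩
  rw [hsetEq, Set.ncard_image_of_injOn hinj,
    Set.ncard_diff_singleton_of_mem hi₀, B.ncard_Z]

end Stmt10Aux

end Stmt10AuxSection

theorem stmt10 (M : Type*) [TopologicalSpace M] (n : ℕ) (c : M → ℕ)
    (hM : IsManifoldWithFaces M n c)
    (S : Set (Set M)) (hS : S ⊆ connFaces M c)
    (hdisj : S.Pairwise Disjoint) :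
    IsManifoldWithFaces (↥(⋃₀ S)) (n - 1) (fun x => c x.1 - 1) := by
  obtain ⟨h1, h2⟩ := hM
  constructor
  · intro x'
    obtain ⟨A₀, hA₀S, hxA₀⟩ := x'.2
    cases n with
    | zero =>
        exfalso
        obtain ⟨B⟩ := Stmt10Aux.boxAt_nonempty h1 x'.1
        have hpos : 1 ≤ c x'.1 := B.depth_pos (hS hA₀S) hxA₀
        have hzero : c x'.1 = 0 := by
          rw [← B.ncard_Z]
          have hZ : B.Z = ∅ := Set.eq_empty_of_isEmpty _
          rw [hZ, Set.ncard_empty]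
        omega
    | succ m =>
        obtain ⟨B⟩ := Stmt10Aux.boxAt_nonempty h1 x'.1
        obtain ⟨i₀, hi₀, hA₀F, hNU⟩ := Stmt10Aux.N_inter_UW h2 hS hdisj hA₀S hxA₀ B
        exact Stmt10Aux.chartN (⋃₀ S) B x'.2 i₀ hNU
  · intro x'
    exact Stmt10Aux.countN h1 h2 hS hdisj x'.2
end

section
/- Let Z(q), Z(q+1), …, Z(p) be pointed spaces and suppose given a functor Z from the category 𝒥ᵖ_q (objects the integers q ≤ m ≤ p, morphisms Mor(n,m) = J(n,m)^+ for n > m, with composition induced by addition) to pointed spaces with Z(m) as above. Then the geometric realization |Z| = ⨆_{q≤j≤p} Z(j) ∧ J(j,q−1)^+ / ∼ admits a filtration whose j-th subquotient is homeomorphic to the iterated cone c^{j−q}(Z(j)) modulo its 'boundary', i.e., |Z| = Z(q) ∪ c(Z(q+1)) ∪ ⋯ ∪ c^{p−q}(Z(p)) as an iterated mapping cone. -/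
open OnePoint
set_option linter.unusedSectionVars false
set_option maxHeartbeats 1000000

/-!
STATEMENT 15: Given a functor `Z` from the category `𝒥ᵖ_q` (objects the integers
`q ≤ m ≤ p`, morphisms `Mor(n,m) = J(n,m)⁺`, composition induced by addition of
sequences) to pointed spaces, the geometric realization
`|Z| = ⨆_{q≤j≤p} Z(j) ∧ J(j,q−1)⁺ / ∼` admits a filtration whose `j`-th subquotient is
homeomorphic to the iterated cone `c^{j−q}(Z(j)) = Z(j) ∧ J(j,q−1)⁺` modulo its
boundary; i.e. `|Z| = Z(q) ∪ c(Z(q+1)) ∪ ⋯ ∪ c^{p−q}(Z(p))` as an iterated mapping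
cone.

The functor is encoded by its action maps `act n m : Z(n) × J(n,m)⁺ → Z(m)`, which are
basepoint-preserving in each variable and compatible with the addition
`J(n,m) × J(m,l) → J(n,l)`; the realization identifies `(z, s+t)` in the `n`-summand
with `(act n m (z,s), t)` in the `m`-summand, and collapses all degenerate points
(basepoint in either coordinate) to the basepoint.
-/

/-- The space `J(n,m)`: sequences of nonnegative reals supported in `(m,n)`. -/
def JSpace (n m : ℤ) : Type :=
  {t : ℤ → ℝ // (∀ i, 0 ≤ t i) ∧ ∀ i, ¬(m < i ∧ i < n) → t i = 0}

instance (n m : ℤ) : TopologicalSpace (JSpace n m) := by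
  unfold JSpace; infer_instance

/-- Addition of sequences `J(n,m) × J(m,l) → J(n,l)`. -/
def addJ {n m l : ℤ} (hnm : m < n) (hml : l < m) (s : JSpace n m) (t : JSpace m l) :
    JSpace n l :=
  ⟨fun i => s.1 i + t.1 i, fun i => add_nonneg (s.2.1 i) (t.2.1 i), by
    intro i hi
    have h1 : ¬(m < i ∧ i < n) := fun h => hi ⟨lt_trans hml h.1, h.2⟩
    have h2 : ¬(l < i ∧ i < m) := fun h => hi ⟨h.1, lt_trans h.2 hnm⟩
    show s.1 i + t.1 i = 0
    rw [s.2.2 i h1, t.2.2 i h2, add_zero]⟩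

section Realization

variable (q p : ℤ) (Z : ℤ → Type) [∀ i, TopologicalSpace (Z i)] (z0 : ∀ i, Z i)
  (act : ∀ n m : ℤ, C(Z n × OnePoint (JSpace n m), Z m))

/-- The total space of the realization: the disjoint union of the `Z(j) × J(j,q−1)⁺`. -/
def RTot : Type :=
  (j : Set.Icc q p) × (Z j.1 × OnePoint (JSpace j.1 (q - 1)))

instance : TopologicalSpace (RTot q p Z) := by
  unfold RTot; infer_instance

/-- A point is degenerate if either coordinate is the basepoint. -/
def IsDegen (x : RTot q p Z) : Prop :=
  x.2.1 = z0 x.1.1 ∨ x.2.2 = ∞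

/-- The identifications defining the geometric realization `|Z|`: degenerate points are
collapsed to the basepoint, and for `j > i` the image of `Z(j) × J(j,i) × J(i,q−1)` in
`Z(j) × J(j,q−1)` is identified with its image in `Z(i) × J(i,q−1)` under the functor's
action on morphisms. -/
inductive RRel : RTot q p Z → RTot q p Z → Prop
  | base (x y : RTot q p Z) : IsDegen q p Z z0 x → IsDegen q p Z z0 y → RRel x y
  | glue (j i : Set.Icc q p) (h : i.1 < j.1) (hql : q - 1 < i.1) (z : Z j.1)
      (s : JSpace j.1 i.1) (t : JSpace i.1 (q - 1)) :
      RRel ⟨j, (z, OnePoint.some (addJ h hql s t))⟩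
        ⟨i, (act j.1 i.1 (z, OnePoint.some s), OnePoint.some t)⟩

/-- The geometric realization `|Z|`. -/
def Realization : Type := Quot (RRel q p Z z0 act)

instance : TopologicalSpace (Realization q p Z z0 act) := by
  unfold Realization; infer_instance

/-- The filtration of `|Z|` by the images of the summands `Z(j) ∧ J(j,q−1)⁺`, `j ≤ r`. -/
def Fil (r : ℤ) : Set (Realization q p Z z0 act) :=
  {x | ∃ (j : Set.Icc q p) (w : Z j.1 × OnePoint (JSpace j.1 (q - 1))),
    j.1 ≤ r ∧ x = Quot.mk _ ⟨j, w⟩}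

/-- The `r`-th subquotient of the filtration: `Fil r` with `Fil (r−1)` collapsed. -/
def SubQ (r : ℤ) : Type :=
  Quot (fun x y : ↥(Fil q p Z z0 act r) =>
    x.1 ∈ Fil q p Z z0 act (r - 1) ∧ y.1 ∈ Fil q p Z z0 act (r - 1))

instance (r : ℤ) : TopologicalSpace (SubQ q p Z z0 act r) := by
  unfold SubQ; infer_instance

/-- Degeneracy in the iterated cone `Z(j) ∧ J(j,q−1)⁺` modulo its boundary: basepoint in
either coordinate, or some coordinate of `J(j,q−1)` in its supporting range vanishes. -/
def CellDegen (j : ℤ) (w : Z j × OnePoint (JSpace j (q - 1))) : Prop :=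
  w.1 = z0 j ∨ w.2 = ∞ ∨
    ∃ s : JSpace j (q - 1), w.2 = OnePoint.some s ∧ ∃ i, q ≤ i ∧ i < j ∧ s.1 i = 0

/-- The iterated cone `c^{j−q}(Z(j)) = Z(j) ∧ J(j,q−1)⁺` modulo its boundary. -/
def CellQ (j : ℤ) : Type :=
  Quot (fun a b : Z j × OnePoint (JSpace j (q - 1)) =>
    CellDegen q Z z0 j a ∧ CellDegen q Z z0 j b)

instance (j : ℤ) : TopologicalSpace (CellQ q Z z0 j) := by
  unfold CellQ; infer_instance

-- auxiliary

instance (n m : ℤ) : T2Space (JSpace n m) := by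
  unfold JSpace; infer_instance

lemma jlow {n m : ℤ} (s : JSpace n m) {k : ℤ} (hk : k ≤ m) : s.1 k = 0 :=
  s.2.2 k (fun hc => absurd hc.1 (not_lt.2 hk))

lemma jhigh {n m : ℤ} (s : JSpace n m) {k : ℤ} (hk : n ≤ k) : s.1 k = 0 :=
  s.2.2 k (fun hc => absurd hc.2 (not_lt.2 hk))

lemma continuous_jcoord (n m k : ℤ) : Continuous (fun u : JSpace n m => u.1 k) :=
  (continuous_apply k).comp continuous_subtype_val

def hiPart {n m : ℤ} (i : ℤ) (u : JSpace n m) : JSpace n i :=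
  ⟨fun k => if i < k then u.1 k else 0, by
    constructor
    · intro k
      dsimp only
      split
      · exact u.2.1 k
      · exact le_rfl
    · intro k hk
      dsimp only
      split
      · exact u.2.2 k (fun hc => hk ⟨‹i < k›, hc.2⟩)
      · rfl⟩

def loPart {n m : ℤ} (i : ℤ) (u : JSpace n m) : JSpace i m :=
  ⟨fun k => if k < i then u.1 k else 0, by
    constructor
    · intro k
      dsimp only
      split
      · exact u.2.1 k
      · exact le_rfl
    · intro k hk
      dsimp only
      split
      · exact u.2.2 k (fun hc => hk ⟨hc.1, ‹k < i›⟩)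
      · rfl⟩

lemma continuous_hiPart (n m i : ℤ) : Continuous (fun u : JSpace n m => hiPart i u) := by
  apply Continuous.subtype_mk
  apply continuous_pi
  intro k
  show Continuous fun u : JSpace n m => if i < k then u.1 k else 0
  split
  · exact continuous_jcoord n m k
  · exact continuous_const

lemma continuous_loPart (n m i : ℤ) : Continuous (fun u : JSpace n m => loPart i u) := by
  apply Continuous.subtype_mk
  apply continuous_pi
  intro k
  show Continuous fun u : JSpace n m => if k < i then u.1 k else 0
  split
  · exact continuous_jcoord n m k
  · exact continuous_const

lemma addJ_hiPart_loPart {n m i : ℤ} (hin : i < n) (hmi : m < i) (u : JSpace n m)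
    (hu : u.1 i = 0) : addJ hin hmi (hiPart i u) (loPart i u) = u := by
  apply Subtype.ext
  funext k
  show (if i < k then u.1 k else 0) + (if k < i then u.1 k else 0) = u.1 k
  rcases lt_trichotomy k i with h | h | h
  · rw [if_neg (by omega), if_pos h, zero_add]
  · subst h; rw [hu]; simp
  · rw [if_pos h, if_neg (by omega), add_zero]

lemma hiPart_addJ_eq {n m l : ℤ} (hnm : m < n) (hml : l < m) (s : JSpace n m)
    (t : JSpace m l) : hiPart m (addJ hnm hml s t) = s := by
  apply Subtype.ext; funext k
  show (if m < k then s.1 k + t.1 k else 0) = s.1 k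
  split
  · rw [jhigh t (le_of_lt ‹m < k›), add_zero]
  · rw [jlow s (not_lt.1 ‹¬ m < k›)]

lemma loPart_addJ_eq {n m l : ℤ} (hnm : m < n) (hml : l < m) (s : JSpace n m)
    (t : JSpace m l) : loPart m (addJ hnm hml s t) = t := by
  apply Subtype.ext; funext k
  show (if k < m then s.1 k + t.1 k else 0) = t.1 k
  split
  · rw [jlow s (le_of_lt ‹k < m›), zero_add]
  · rw [jhigh t (not_lt.1 ‹¬ k < m›)]

lemma hiPart_addJ_of_lt {n m l i : ℤ} (hnm : m < n) (hml : l < m) (him : i < m)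
    (s : JSpace n m) (t : JSpace m l) :
    hiPart i (addJ hnm hml s t) = addJ hnm him s (hiPart i t) := by
  apply Subtype.ext; funext k
  show (if i < k then s.1 k + t.1 k else 0) = s.1 k + (if i < k then t.1 k else 0)
  split
  · rfl
  · rw [jlow s (by omega), add_zero]

lemma loPart_addJ_of_lt {n m l i : ℤ} (hnm : m < n) (hml : l < m) (him : i ≤ m)
    (s : JSpace n m) (t : JSpace m l) :
    loPart i (addJ hnm hml s t) = loPart i t := by
  apply Subtype.ext; funext k
  show (if k < i then s.1 k + t.1 k else 0) = (if k < i then t.1 k else 0)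
  split
  · rw [jlow s (by omega), zero_add]
  · rfl

lemma continuous_addJ {n m l : ℤ} (hnm : m < n) (hml : l < m) :
    Continuous (fun w : JSpace n m × JSpace m l => addJ hnm hml w.1 w.2) := by
  apply Continuous.subtype_mk
  apply continuous_pi
  intro k
  exact ((continuous_jcoord n m k).comp continuous_fst).add
    ((continuous_jcoord m l k).comp continuous_snd)

/-! ### Auxiliary definitions for the proof -/

/-- Class of a point in the cell quotient. -/
def cellMk (j : ℤ) (w : Z j × OnePoint (JSpace j (q - 1))) : CellQ q Z z0 j :=
  Quot.mk _ w

/-- The basepoint of the cell quotient. -/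
def cellBase (j : ℤ) : CellQ q Z z0 j := cellMk q Z z0 j (z0 j, ∞)

lemma cellMk_eq_base {j : ℤ} {w : Z j × OnePoint (JSpace j (q - 1))}
    (hw : CellDegen q Z z0 j w) : cellMk q Z z0 j w = cellBase q Z z0 j :=
  Quot.sound ⟨hw, Or.inr (Or.inl rfl)⟩

/-- The comparison map from the total space to the `j`-th cell quotient. -/
def fbar (j : ℤ) (x : RTot q p Z) : CellQ q Z z0 j :=
  if h : x.1.1 = j then cellMk q Z z0 j (h ▸ x.2)
  else if x.1.1 < j then cellBase q Z z0 j
  else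
    match x.2.2 with
    | OnePoint.infty => cellBase q Z z0 j
    | OnePoint.some u =>
        cellMk q Z z0 j
          (act x.1.1 j (x.2.1, OnePoint.some (hiPart j u)), OnePoint.some (loPart j u))

variable {q p Z}

lemma fbar_mk_eq {j : ℤ} (hj : j ∈ Set.Icc q p) (w : Z j × OnePoint (JSpace j (q - 1))) :
    fbar q p Z z0 act j ⟨⟨j, hj⟩, w⟩ = cellMk q Z z0 j w := by
  simp [fbar]

lemma fbar_mk_lt {j : ℤ} (i : Set.Icc q p) (hij : i.1 < j)
    (w : Z i.1 × OnePoint (JSpace i.1 (q - 1))) :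
    fbar q p Z z0 act j ⟨i, w⟩ = cellBase q Z z0 j := by
  simp only [fbar]
  rw [dif_neg (by omega), if_pos hij]

lemma fbar_mk_gt_some {j : ℤ} (i : Set.Icc q p) (hij : j < i.1) (z : Z i.1)
    (u : JSpace i.1 (q - 1)) :
    fbar q p Z z0 act j ⟨i, (z, OnePoint.some u)⟩ =
      cellMk q Z z0 j
        (act i.1 j (z, OnePoint.some (hiPart j u)), OnePoint.some (loPart j u)) := by
  simp only [fbar]
  rw [dif_neg (by omega), if_neg (by omega)]

lemma fbar_mk_gt_infty {j : ℤ} (i : Set.Icc q p) (hij : j < i.1) (z : Z i.1) :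
    fbar q p Z z0 act j ⟨i, (z, ∞)⟩ = cellBase q Z z0 j := by
  simp only [fbar]
  rw [dif_neg (by omega), if_neg (by omega)]

end Realization

section Chunk3
variable {q p : ℤ} {Z : ℤ → Type} [∀ i, TopologicalSpace (Z i)] {z0 : ∀ i, Z i}
  {act : ∀ n m : ℤ, C(Z n × OnePoint (JSpace n m), Z m)}

lemma fbar_degen {j : ℤ}
    (hact_pt : ∀ n m (t : OnePoint (JSpace n m)), act n m (z0 n, t) = z0 m)
    {x : RTot q p Z} (hx : IsDegen q p Z z0 x) :
    fbar q p Z z0 act j x = cellBase q Z z0 j := by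
  obtain ⟨⟨i, hi⟩, z, u⟩ := x
  rcases lt_trichotomy i j with h | h | h
  · exact fbar_mk_lt z0 act _ h _
  · subst h
    rw [fbar_mk_eq]
    exact cellMk_eq_base q Z z0 (Or.imp id Or.inl hx)
  · rcases hx with hz | hu
    · dsimp at hz
      subst hz
      cases u with
      | infty => exact fbar_mk_gt_infty z0 act _ h _
      | coe u =>
        rw [fbar_mk_gt_some z0 act _ h, hact_pt]
        exact cellMk_eq_base q Z z0 (Or.inl rfl)
    · dsimp at hu
      subst hu
      exact fbar_mk_gt_infty z0 act _ h _

lemma fbar_rrel {j : ℤ}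
    (hact_pt : ∀ n m (t : OnePoint (JSpace n m)), act n m (z0 n, t) = z0 m)
    (hact_comp : ∀ (n m l : ℤ) (hnm : m < n) (hml : l < m) (z : Z n)
      (s : JSpace n m) (t : JSpace m l),
      act n l (z, OnePoint.some (addJ hnm hml s t))
        = act m l (act n m (z, OnePoint.some s), OnePoint.some t))
    {x y : RTot q p Z} (hxy : RRel q p Z z0 act x y) :
    fbar q p Z z0 act j x = fbar q p Z z0 act j y := by
  cases hxy with
  | base x y hx hy => rw [fbar_degen hact_pt hx, fbar_degen hact_pt hy]
  | glue jj ii h hql z s t =>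
    obtain ⟨n, hn⟩ := jj
    obtain ⟨m, hm⟩ := ii
    have h' : m < n := h
    have hql' : q - 1 < m := hql
    dsimp at z s t ⊢
    rcases lt_trichotomy n j with h1 | h1 | h1
    · rw [fbar_mk_lt z0 act _ h1, fbar_mk_lt z0 act _ (show m < j by omega)]
    · subst h1
      rw [fbar_mk_eq, fbar_mk_lt z0 act _ h]
      refine cellMk_eq_base q Z z0 (Or.inr (Or.inr ⟨_, rfl, m, by omega, h, ?_⟩))
      show s.1 m + t.1 m = 0
      rw [jlow s le_rfl, jhigh t le_rfl, add_zero]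
    · rw [fbar_mk_gt_some z0 act _ h1]
      rcases lt_trichotomy m j with h2 | h2 | h2
      · rw [fbar_mk_lt z0 act _ h2]
        refine cellMk_eq_base q Z z0 (Or.inr (Or.inr ⟨_, rfl, m, by omega, h2, ?_⟩))
        show (if m < j then (addJ h hql s t).1 m else 0) = 0
        rw [if_pos h2]
        show s.1 m + t.1 m = 0
        rw [jlow s le_rfl, jhigh t le_rfl, add_zero]
      · subst h2
        rw [fbar_mk_eq, hiPart_addJ_eq, loPart_addJ_eq]
      · rw [fbar_mk_gt_some z0 act _ h2, hiPart_addJ_of_lt h hql h2,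
          loPart_addJ_of_lt h hql (le_of_lt h2), hact_comp n m j h h2 z s (hiPart j t)]

lemma fil_mono : Monotone (Fil q p Z z0 act) := by
  intro r r' hrr x hx
  obtain ⟨i, w, hi, hxx⟩ := hx
  exact ⟨i, w, le_trans hi hrr, hxx⟩

lemma mem_fil_self (i : Set.Icc q p) (w : Z i.1 × OnePoint (JSpace i.1 (q - 1))) :
    Quot.mk _ ⟨i, w⟩ ∈ Fil q p Z z0 act i.1 :=
  ⟨i, w, le_rfl, rfl⟩

/-- The basepoint of the realization. -/
def realBase (q p : ℤ) (Z : ℤ → Type) [∀ i, TopologicalSpace (Z i)] (z0 : ∀ i, Z i)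
    (act : ∀ n m : ℤ, C(Z n × OnePoint (JSpace n m), Z m)) (hqp : q ≤ p) :
    Realization q p Z z0 act :=
  Quot.mk _ ⟨⟨q, le_rfl, hqp⟩, (z0 q, ∞)⟩

lemma degen_eq_realBase (hqp : q ≤ p) {x : RTot q p Z} (hx : IsDegen q p Z z0 x) :
    Quot.mk _ x = realBase q p Z z0 act hqp :=
  Quot.sound (RRel.base x _ hx (Or.inr rfl))

lemma realBase_mem_fil (hqp : q ≤ p) {r : ℤ} (hr : q ≤ r) :
    realBase q p Z z0 act hqp ∈ Fil q p Z z0 act r :=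
  ⟨⟨q, le_rfl, hqp⟩, (z0 q, ∞), hr, rfl⟩

lemma mem_fil_of_degen (hqp : q ≤ p) {x : RTot q p Z} (hx : IsDegen q p Z z0 x)
    {r : ℤ} (hr : q ≤ r) : Quot.mk _ x ∈ Fil q p Z z0 act r := by
  rw [degen_eq_realBase hqp hx]
  exact realBase_mem_fil hqp hr

lemma mem_fil_of_split (i : Set.Icc q p) (z : Z i.1) (u : JSpace i.1 (q - 1)) {m : ℤ}
    (hq : q ≤ m) (hmi : m < i.1) (hu : u.1 m = 0) :
    Quot.mk _ (⟨i, (z, OnePoint.some u)⟩ : RTot q p Z) ∈ Fil q p Z z0 act m := by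
  have hm : m ∈ Set.Icc q p := ⟨hq, le_trans (le_of_lt hmi) i.2.2⟩
  have key : Quot.mk (RRel q p Z z0 act) ⟨i, (z, OnePoint.some u)⟩ =
      Quot.mk _ ⟨⟨m, hm⟩,
        (act i.1 m (z, OnePoint.some (hiPart m u)), OnePoint.some (loPart m u))⟩ := by
    conv_lhs => rw [← addJ_hiPart_loPart hmi (by omega : q - 1 < m) u hu]
    exact Quot.sound (RRel.glue i ⟨m, hm⟩ hmi (show q - 1 < m by omega) z _ _)
  exact (congrArg (fun x : Realization q p Z z0 act => x ∈ Fil q p Z z0 act m) key).mpr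
    (mem_fil_self (⟨m, hm⟩ : Set.Icc q p) _)

/-- `u` has no vanishing coordinate in the range `[q, j]`. -/
def NoSplit (q j : ℤ) {n : ℤ} (u : JSpace n (q - 1)) : Prop :=
  ∀ m, q ≤ m → m ≤ j → u.1 m ≠ 0

/-- The invariant used to show certain points are not in `Fil j`. -/
def Bad (j : ℤ) (z0 : ∀ i, Z i) (act : ∀ n m : ℤ, C(Z n × OnePoint (JSpace n m), Z m))
    (x : RTot q p Z) : Prop :=
  j < x.1.1 ∧ (∃ u, x.2.2 = OnePoint.some u ∧ NoSplit q j u) ∧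
    fbar q p Z z0 act j x ≠ cellBase q Z z0 j

lemma bad_iff {j : ℤ}
    (hact_pt : ∀ n m (t : OnePoint (JSpace n m)), act n m (z0 n, t) = z0 m)
    (hact_comp : ∀ (n m l : ℤ) (hnm : m < n) (hml : l < m) (z : Z n)
      (s : JSpace n m) (t : JSpace m l),
      act n l (z, OnePoint.some (addJ hnm hml s t))
        = act m l (act n m (z, OnePoint.some s), OnePoint.some t))
    {x y : RTot q p Z} (hxy : RRel q p Z z0 act x y) :
    Bad j z0 act x ↔ Bad j z0 act y := by
  have hf := fbar_rrel (j := j) hact_pt hact_comp hxy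
  cases hxy with
  | base x y hx hy =>
    constructor
    · rintro ⟨-, -, h3⟩; exact absurd (fbar_degen hact_pt hx) h3
    · rintro ⟨-, -, h3⟩; exact absurd (fbar_degen hact_pt hy) h3
  | glue jj ii h hql z s t =>
    obtain ⟨n, hn⟩ := jj
    obtain ⟨m, hm⟩ := ii
    have h' : m < n := h
    have hql' : q - 1 < m := hql
    dsimp at z s t hf ⊢
    by_cases hmj : m ≤ j
    · constructor
      · rintro ⟨-, ⟨u, hu, hns⟩, -⟩
        have hu' : addJ h hql s t = u := Option.some.inj hu
        refine absurd ?_ (hns m (by omega) hmj)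
        rw [← hu']
        show s.1 m + t.1 m = 0
        rw [jlow s le_rfl, jhigh t le_rfl, add_zero]
      · rintro ⟨h1, -, -⟩
        exact absurd (show j < m from h1) (by omega)
    · have heqv : ∀ m', q ≤ m' → m' ≤ j → (addJ h hql s t).1 m' = t.1 m' := by
        intro m' _ hm'
        show s.1 m' + t.1 m' = t.1 m'
        rw [jlow s (by omega), zero_add]
      constructor
      · rintro ⟨-, ⟨u, hu, hns⟩, h3⟩
        have hu' : addJ h hql s t = u := Option.some.inj hu
        refine ⟨show j < m by omega, ⟨t, rfl, ?_⟩, by rw [← hf]; exact h3⟩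
        intro m' h1 h2 h0
        exact hns m' h1 h2 (by rw [← hu', heqv m' h1 h2]; exact h0)
      · rintro ⟨-, ⟨u, hu, hns⟩, h3⟩
        have hu' : t = u := Option.some.inj hu
        refine ⟨show j < n by omega, ⟨_, rfl, ?_⟩, by rw [hf]; exact h3⟩
        intro m' h1 h2 h0
        exact hns m' h1 h2 (by rw [← hu']; rw [heqv m' h1 h2] at h0; exact h0)

lemma not_mem_fil {j : ℤ}
    (hact_pt : ∀ n m (t : OnePoint (JSpace n m)), act n m (z0 n, t) = z0 m)
    (hact_comp : ∀ (n m l : ℤ) (hnm : m < n) (hml : l < m) (z : Z n)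
      (s : JSpace n m) (t : JSpace m l),
      act n l (z, OnePoint.some (addJ hnm hml s t))
        = act m l (act n m (z, OnePoint.some s), OnePoint.some t))
    (i : Set.Icc q p) (z : Z i.1) (u : JSpace i.1 (q - 1)) (hij : j < i.1)
    (hns : NoSplit q j u)
    (hfb : fbar q p Z z0 act j ⟨i, (z, OnePoint.some u)⟩ ≠ cellBase q Z z0 j) :
    Quot.mk _ (⟨i, (z, OnePoint.some u)⟩ : RTot q p Z) ∉ Fil q p Z z0 act j := by
  rintro ⟨i', w', hi', heq⟩
  have hE := Quot.eq.mp heq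
  have hBad : Bad j z0 act (⟨i, (z, OnePoint.some u)⟩ : RTot q p Z) :=
    ⟨hij, ⟨u, rfl, hns⟩, hfb⟩
  have key : ∀ a b : RTot q p Z, Relation.EqvGen (RRel q p Z z0 act) a b →
      (Bad j z0 act a ↔ Bad j z0 act b) := by
    intro a b hab
    induction hab with
    | rel _ _ hr => exact bad_iff hact_pt hact_comp hr
    | refl _ => exact Iff.rfl
    | symm _ _ _ ih => exact ih.symm
    | trans _ _ _ _ _ ih1 ih2 => exact ih1.trans ih2
  have hBad' := (key _ _ hE).mp hBad
  exact absurd (show j < i'.1 from hBad'.1) (by omega)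

lemma fbar_base_or_not_mem_fil {j : ℤ}
    (hact_pt : ∀ n m (t : OnePoint (JSpace n m)), act n m (z0 n, t) = z0 m)
    (hact_comp : ∀ (n m l : ℤ) (hnm : m < n) (hml : l < m) (z : Z n)
      (s : JSpace n m) (t : JSpace m l),
      act n l (z, OnePoint.some (addJ hnm hml s t))
        = act m l (act n m (z, OnePoint.some s), OnePoint.some t))
    (i : Set.Icc q p) (z : Z i.1) (u : JSpace i.1 (q - 1)) (hij : j < i.1)
    (hns : NoSplit q j u) :
    fbar q p Z z0 act j ⟨i, (z, OnePoint.some u)⟩ = cellBase q Z z0 j ∨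
      Quot.mk _ (⟨i, (z, OnePoint.some u)⟩ : RTot q p Z) ∉ Fil q p Z z0 act j := by
  by_cases hfb : fbar q p Z z0 act j ⟨i, (z, OnePoint.some u)⟩ = cellBase q Z z0 j
  · exact Or.inl hfb
  · exact Or.inr (not_mem_fil hact_pt hact_comp i z u hij hns hfb)

end Chunk3

section Chunk4
open Topology

variable {q p : ℤ} {Z : ℤ → Type} [∀ i, TopologicalSpace (Z i)] {z0 : ∀ i, Z i}
  {act : ∀ n m : ℤ, C(Z n × OnePoint (JSpace n m), Z m)}
  (hact_pt : ∀ n m (t : OnePoint (JSpace n m)), act n m (z0 n, t) = z0 m)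
  (hact_infty : ∀ n m (z : Z n), act n m (z, ∞) = z0 m)
  (hact_comp : ∀ (n m l : ℤ) (hnm : m < n) (hml : l < m) (z : Z n)
    (s : JSpace n m) (t : JSpace m l),
    act n l (z, OnePoint.some (addJ hnm hml s t))
      = act m l (act n m (z, OnePoint.some s), OnePoint.some t))

/-- The descent of `fbar` to the realization. -/
def flift (j : ℤ) : Realization q p Z z0 act → CellQ q Z z0 j :=
  Quot.lift (fbar q p Z z0 act j) (fun _ _ h => fbar_rrel hact_pt hact_comp h)

lemma flift_of_mem_fil_lt {j r : ℤ} (hrj : r < j) {x : Realization q p Z z0 act}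
    (hx : x ∈ Fil q p Z z0 act r) :
    flift hact_pt hact_comp j x = cellBase q Z z0 j := by
  obtain ⟨i, w, hi, rfl⟩ := hx
  exact fbar_mk_lt z0 act i (by omega) w

/-- The map from the subquotient to the cell quotient. -/
def Fmap (j : Set.Icc q p) : SubQ q p Z z0 act j.1 → CellQ q Z z0 j.1 :=
  Quot.lift (fun x => flift hact_pt hact_comp j.1 x.1)
    (fun _ _ hab => by
      show flift hact_pt hact_comp j.1 _ = flift hact_pt hact_comp j.1 _
      rw [flift_of_mem_fil_lt hact_pt hact_comp (by omega) hab.1,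
        flift_of_mem_fil_lt hact_pt hact_comp (by omega) hab.2])

lemma gmap_aux (hqp : q ≤ p) (j : Set.Icc q p)
    {a b : Z j.1 × OnePoint (JSpace j.1 (q - 1))}
    (ha : CellDegen q Z z0 j.1 a) (hb : CellDegen q Z z0 j.1 b) :
    (Quot.mk _ (⟨Quot.mk _ ⟨j, a⟩, mem_fil_self j a⟩ : ↥(Fil q p Z z0 act j.1))
      : SubQ q p Z z0 act j.1) =
    Quot.mk _ ⟨Quot.mk _ ⟨j, b⟩, mem_fil_self j b⟩ := by
  by_cases hqj : q < j.1
  · have key : ∀ w, CellDegen q Z z0 j.1 w →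
        (Quot.mk _ (⟨j, w⟩ : RTot q p Z) : Realization q p Z z0 act)
          ∈ Fil q p Z z0 act (j.1 - 1) := by
      intro w hw
      rcases hw with h1 | h2 | h3
      · exact mem_fil_of_degen hqp (Or.inl h1) (by omega)
      · exact mem_fil_of_degen hqp (Or.inr h2) (by omega)
      · obtain ⟨w1, w2⟩ := w
        obtain ⟨s, hs, i0, hi1, hi2, h0⟩ := h3
        dsimp at hs
        subst hs
        exact fil_mono (by omega) (mem_fil_of_split j w1 s hi1 hi2 h0)
    exact Quot.sound ⟨key a ha, key b hb⟩
  · have hdeg : ∀ w, CellDegen q Z z0 j.1 w → IsDegen q p Z z0 (⟨j, w⟩ : RTot q p Z) := by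
      intro w hw
      rcases hw with h1 | h2 | h3
      · exact Or.inl h1
      · exact Or.inr h2
      · obtain ⟨s, hs, i0, hi1, hi2, h0⟩ := h3
        have : q ≤ j.1 := j.2.1
        exact absurd hi2 (by omega)
    have heq : (Quot.mk _ (⟨j, a⟩ : RTot q p Z) : Realization q p Z z0 act)
        = Quot.mk _ ⟨j, b⟩ :=
      Quot.sound (RRel.base _ _ (hdeg a ha) (hdeg b hb))
    exact congrArg (Quot.mk _) (Subtype.ext heq)

/-- The map from the cell quotient to the subquotient. -/
def Gmap (hqp : q ≤ p) (j : Set.Icc q p) :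
    CellQ q Z z0 j.1 → SubQ q p Z z0 act j.1 :=
  Quot.lift (fun w => Quot.mk _ ⟨Quot.mk _ ⟨j, w⟩, mem_fil_self j w⟩)
    (fun _ _ hab => gmap_aux hqp j hab.1 hab.2)

lemma Fmap_Gmap (hqp : q ≤ p) (j : Set.Icc q p) (b : CellQ q Z z0 j.1) :
    Fmap hact_pt hact_comp j (Gmap (act := act) hqp j b) = b := by
  induction b using Quot.ind with
  | _ w =>
    obtain ⟨jv, hj⟩ := j
    have h1 : Fmap hact_pt hact_comp ⟨jv, hj⟩
        (Gmap (act := act) hqp ⟨jv, hj⟩ (Quot.mk _ w))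
        = fbar q p Z z0 act jv ⟨⟨jv, hj⟩, w⟩ := rfl
    rw [h1, fbar_mk_eq]
    rfl

lemma Gmap_Fmap (hqp : q ≤ p) (j : Set.Icc q p) (a : SubQ q p Z z0 act j.1) :
    Gmap (act := act) hqp j (Fmap hact_pt hact_comp j a) = a := by
  induction a using Quot.ind with
  | _ x =>
    obtain ⟨x, hx⟩ := x
    have hx' := hx
    obtain ⟨i, w, hij, hrep⟩ := hx'
    subst hrep
    rcases lt_or_eq_of_le hij with hlt | heq
    · have hfb2 : Fmap hact_pt hact_comp j
          (Quot.mk _ ⟨Quot.mk _ ⟨i, w⟩, hx⟩) = cellBase q Z z0 j.1 :=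
        fbar_mk_lt z0 act i hlt w
      rw [hfb2]
      have memA : (Quot.mk _ (⟨j, (z0 j.1, ∞)⟩ : RTot q p Z) : Realization q p Z z0 act)
          ∈ Fil q p Z z0 act (j.1 - 1) := by
        have hq1 : q ≤ i.1 := i.2.1
        exact mem_fil_of_degen hqp (Or.inr rfl) (by omega)
      have memB : (Quot.mk _ (⟨i, w⟩ : RTot q p Z) : Realization q p Z z0 act)
          ∈ Fil q p Z z0 act (j.1 - 1) := ⟨i, w, by omega, rfl⟩
      exact Quot.sound ⟨memA, memB⟩
    · obtain ⟨iv, hiv⟩ := i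
      have heq' : iv = j.1 := heq
      subst heq'
      have hfb2 : Fmap hact_pt hact_comp j
          (Quot.mk _ ⟨Quot.mk _ ⟨⟨j.1, hiv⟩, w⟩, hx⟩) = cellMk q Z z0 j.1 w :=
        fbar_mk_eq z0 act hiv w
      rw [hfb2]
      exact congrArg (Quot.mk _) (Subtype.ext rfl)

lemma continuous_Gmap (hqp : q ≤ p) (j : Set.Icc q p) :
    Continuous (Gmap (z0 := z0) (act := act) hqp j) := by
  unfold Gmap
  apply continuous_quot_lift
  have h1 : Continuous (fun w : Z j.1 × OnePoint (JSpace j.1 (q - 1)) =>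
      (Quot.mk (RRel q p Z z0 act) ⟨j, w⟩ : Realization q p Z z0 act)) :=
    continuous_quot_mk.comp continuous_sigmaMk
  have h2 : Continuous (fun w : Z j.1 × OnePoint (JSpace j.1 (q - 1)) =>
      (⟨Quot.mk _ ⟨j, w⟩, mem_fil_self j w⟩ : ↥(Fil q p Z z0 act j.1))) :=
    h1.subtype_mk _
  exact continuous_quot_mk.comp h2

end Chunk4

section Chunk5
open Topology

variable {q p : ℤ} {Z : ℤ → Type} [∀ i, TopologicalSpace (Z i)] {z0 : ∀ i, Z i}
  {act : ∀ n m : ℤ, C(Z n × OnePoint (JSpace n m), Z m)}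
  (hact_pt : ∀ n m (t : OnePoint (JSpace n m)), act n m (z0 n, t) = z0 m)
  (hact_infty : ∀ n m (z : Z n), act n m (z, ∞) = z0 m)
  (hact_comp : ∀ (n m l : ℤ) (hnm : m < n) (hml : l < m) (z : Z n)
    (s : JSpace n m) (t : JSpace m l),
    act n l (z, OnePoint.some (addJ hnm hml s t))
      = act m l (act n m (z, OnePoint.some s), OnePoint.some t))

lemma noSplit_isOpen (n jv : ℤ) :
    IsOpen {u : JSpace n (q - 1) | NoSplit q jv u} := by
  have hset : {u : JSpace n (q - 1) | NoSplit q jv u} =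
      ⋂ m ∈ Finset.Icc q jv, {u : JSpace n (q - 1) | u.1 m ≠ 0} := by
    ext u
    simp only [Set.mem_setOf_eq, Set.mem_iInter, NoSplit, Finset.mem_Icc, and_imp]
  rw [hset]
  exact isOpen_biInter_finset fun m _ =>
    IsOpen.preimage (continuous_jcoord n (q - 1) m)
      (isOpen_compl_singleton (x := (0 : ℝ)))

include hact_infty in
lemma continuous_Fmap (hqp : q ≤ p) (j : Set.Icc q p) :
    Continuous (Fmap (z0 := z0) (act := act) hact_pt hact_comp j) := by
  obtain ⟨jv, hj⟩ := j
  have hqj : q ≤ jv := hj.1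
  have hjp : jv ≤ p := hj.2
  unfold Fmap
  apply continuous_quot_lift
  rw [continuous_def]
  intro V hV
  -- the candidate open set in the realization
  set U : Set (Realization q p Z z0 act) :=
    flift hact_pt hact_comp jv ⁻¹' V ∪
      {x | cellBase q Z z0 jv ∈ V ∧ x ∉ Fil q p Z z0 act jv} with hU
  rw [isOpen_induced_iff]
  refine ⟨U, ?_, ?_⟩
  swap
  · ext x
    simp only [Set.mem_preimage, Set.mem_union, Set.mem_setOf_eq, hU]
    constructor
    · rintro (h | ⟨-, hnot⟩)
      · exact h
      · exact absurd x.2 hnot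
    · exact Or.inl
  -- openness of `U`
  apply (isQuotientMap_quot_mk (r := RRel q p Z z0 act)).isOpen_preimage.mp
  apply isOpen_sigma_iff.mpr
  intro i
  rcases lt_trichotomy i.1 jv with hij | hij | hij
  · -- summands below jv
    by_cases hbV : cellBase q Z z0 jv ∈ V
    · have : (Sigma.mk i ⁻¹' (Quot.mk (RRel q p Z z0 act) ⁻¹' U)) = Set.univ := by
        apply Set.eq_univ_of_forall
        intro w
        show Quot.mk (RRel q p Z z0 act) ⟨i, w⟩ ∈ U
        left
        show fbar q p Z z0 act jv ⟨i, w⟩ ∈ V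
        rw [fbar_mk_lt z0 act i hij w]
        exact hbV
      exact (congrArg IsOpen this).mpr isOpen_univ
    · have : (Sigma.mk i ⁻¹' (Quot.mk (RRel q p Z z0 act) ⁻¹' U)) = ∅ := by
        apply Set.eq_empty_iff_forall_notMem.mpr
        intro w hw
        rcases hw with h | h
        · have h' : fbar q p Z z0 act jv ⟨i, w⟩ ∈ V := h
          rw [fbar_mk_lt z0 act i hij w] at h'
          exact hbV h'
        · exact hbV h.1
      exact (congrArg IsOpen this).mpr isOpen_empty
  · -- the summand jv itself
    obtain ⟨iv, hiv⟩ := i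
    have hij' : iv = jv := hij
    subst hij'
    have hset : (Sigma.mk (⟨iv, hiv⟩ : Set.Icc q p) ⁻¹'
        (Quot.mk (RRel q p Z z0 act) ⁻¹' U)) =
        (fun w => cellMk q Z z0 iv w) ⁻¹' V := by
      ext w
      constructor
      · rintro (h | ⟨-, hnot⟩)
        · have h' : fbar q p Z z0 act iv ⟨⟨iv, hiv⟩, w⟩ ∈ V := h
          rwa [fbar_mk_eq z0 act hiv w] at h'
        · exact absurd (mem_fil_self (⟨iv, hiv⟩ : Set.Icc q p) w) hnot
      · intro h
        left
        show fbar q p Z z0 act iv ⟨⟨iv, hiv⟩, w⟩ ∈ V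
        rwa [fbar_mk_eq z0 act hiv w]
    exact (congrArg IsOpen hset).mpr (hV.preimage continuous_quot_mk)
  · -- summands above jv
    rw [isOpen_iff_mem_nhds]
    rintro ⟨z, u⟩ hzu
    rw [mem_nhds_iff]
    have hgc : Continuous (fun w : Z i.1 × JSpace i.1 (q - 1) =>
        cellMk q Z z0 jv (act i.1 jv (w.1, OnePoint.some (hiPart jv w.2)),
          OnePoint.some (loPart jv w.2))) := by
      apply continuous_quot_mk.comp
      apply Continuous.prodMk
      · exact (act i.1 jv).continuous.comp (continuous_fst.prodMk
          (OnePoint.continuous_coe.comp ((continuous_hiPart i.1 (q - 1) jv).comp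
            continuous_snd)))
      · exact OnePoint.continuous_coe.comp ((continuous_loPart i.1 (q - 1) jv).comp
          continuous_snd)
    cases u with
    | coe u =>
      by_cases hfV : fbar q p Z z0 act jv ⟨i, (z, OnePoint.some u)⟩ ∈ V
      · -- interior continuity neighborhood
        refine ⟨Prod.map id OnePoint.some ''
          ((fun w : Z i.1 × JSpace i.1 (q - 1) =>
            cellMk q Z z0 jv (act i.1 jv (w.1, OnePoint.some (hiPart jv w.2)),
              OnePoint.some (loPart jv w.2))) ⁻¹' V), ?_, ?_, ?_⟩
        · rintro ⟨z', w⟩ ⟨⟨z'', u''⟩, hmem, heq⟩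
          cases heq
          show Quot.mk (RRel q p Z z0 act) ⟨i, (z'', OnePoint.some u'')⟩ ∈ U
          left
          show fbar q p Z z0 act jv ⟨i, (z'', OnePoint.some u'')⟩ ∈ V
          rw [fbar_mk_gt_some z0 act i hij z'' u'']
          exact hmem
        · exact (IsOpenEmbedding.id.prodMap OnePoint.isOpenEmbedding_coe).isOpenMap _
            (hV.preimage hgc)
        · refine ⟨(z, u), ?_, rfl⟩
          show cellMk q Z z0 jv _ ∈ V
          rw [← fbar_mk_gt_some z0 act i hij z u]
          exact hfV
      · -- the point is not in `Fil jv`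
        have h2 : cellBase q Z z0 jv ∈ V ∧
            (Quot.mk _ (⟨i, (z, OnePoint.some u)⟩ : RTot q p Z) :
              Realization q p Z z0 act) ∉ Fil q p Z z0 act jv := by
          rcases hzu with h | h
          · exact absurd (h : fbar q p Z z0 act jv ⟨i, (z, OnePoint.some u)⟩ ∈ V) hfV
          · exact h
        refine ⟨Set.univ ×ˢ (OnePoint.some '' {u' : JSpace i.1 (q - 1) | NoSplit q jv u'}),
          ?_, ?_, ?_⟩
        · rintro ⟨z', w⟩ ⟨-, hw⟩
          obtain ⟨u', hu', rfl⟩ := hw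
          show Quot.mk (RRel q p Z z0 act) ⟨i, (z', OnePoint.some u')⟩ ∈ U
          rcases fbar_base_or_not_mem_fil hact_pt hact_comp i z' u' hij hu' with hb | hnm
          · left
            show fbar q p Z z0 act jv ⟨i, (z', OnePoint.some u')⟩ ∈ V
            rw [hb]
            exact h2.1
          · exact Or.inr ⟨h2.1, hnm⟩
        · exact isOpen_univ.prod
            (OnePoint.isOpenEmbedding_coe.isOpenMap _ (noSplit_isOpen i.1 jv))
        · refine ⟨trivial, u, ?_, rfl⟩
          intro m h1 h2' h0
          exact h2.2 (fil_mono h2' (mem_fil_of_split i z u h1 (by omega) h0))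
    | infty =>
      have hbV : cellBase q Z z0 jv ∈ V := by
        rcases hzu with h | h
        · have h' : fbar q p Z z0 act jv ⟨i, (z, ∞)⟩ ∈ V := h
          rwa [fbar_mk_gt_infty z0 act i hij z] at h'
        · exact absurd (mem_fil_of_degen hqp (Or.inr rfl) hqj) h.2
      -- the tube argument
      have hq' : q - 1 < jv := by omega
      have hHc : Continuous (fun w : Z i.1 ×
          (OnePoint (JSpace i.1 jv) × OnePoint (JSpace jv (q - 1))) =>
          cellMk q Z z0 jv (act i.1 jv (w.1, w.2.1), w.2.2)) := by
        apply continuous_quot_mk.comp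
        exact ((act i.1 jv).continuous.comp
          (continuous_fst.prodMk (continuous_fst.comp continuous_snd))).prodMk
          (continuous_snd.comp continuous_snd)
      have hΩ : IsOpen ((fun w : Z i.1 ×
          (OnePoint (JSpace i.1 jv) × OnePoint (JSpace jv (q - 1))) =>
          cellMk q Z z0 jv (act i.1 jv (w.1, w.2.1), w.2.2)) ⁻¹' V) := hV.preimage hHc
      have hsub : ({z} : Set (Z i.1)) ×ˢ
          {w : OnePoint (JSpace i.1 jv) × OnePoint (JSpace jv (q - 1)) |
            w.1 = ∞ ∨ w.2 = ∞} ⊆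
          (fun w : Z i.1 × (OnePoint (JSpace i.1 jv) × OnePoint (JSpace jv (q - 1))) =>
            cellMk q Z z0 jv (act i.1 jv (w.1, w.2.1), w.2.2)) ⁻¹' V := by
        rintro ⟨z', s, t⟩ ⟨-, hst⟩
        show cellMk q Z z0 jv (act i.1 jv (z', s), t) ∈ V
        rcases hst with h1 | h1
        · dsimp at h1
          subst h1
          rw [hact_infty i.1 jv z', cellMk_eq_base q Z z0 (Or.inl rfl)]
          exact hbV
        · dsimp at h1
          subst h1
          rw [cellMk_eq_base q Z z0 (Or.inr (Or.inl rfl))]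
          exact hbV
      have hcompD : IsCompact {w : OnePoint (JSpace i.1 jv) ×
          OnePoint (JSpace jv (q - 1)) | w.1 = ∞ ∨ w.2 = ∞} := by
        have hs : {w : OnePoint (JSpace i.1 jv) × OnePoint (JSpace jv (q - 1)) |
            w.1 = ∞ ∨ w.2 = ∞} =
            (({∞} : Set (OnePoint (JSpace i.1 jv))) ×ˢ Set.univ) ∪
              (Set.univ ×ˢ ({∞} : Set (OnePoint (JSpace jv (q - 1))))) := by
          ext ⟨a, b⟩
          simp [Set.mem_prod, eq_comm]
        rw [hs]
        exact (isCompact_singleton.prod isCompact_univ).union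
          (isCompact_univ.prod isCompact_singleton)
      obtain ⟨N, Ω', hNopen, hΩ'open, hzN, hdΩ', hNΩ'⟩ :=
        generalized_tube_lemma isCompact_singleton hcompD hΩ hsub
      have hCc : IsCompact Ω'ᶜ := hΩ'open.isClosed_compl.isCompact
      have hCr : Ω'ᶜ ⊆ Set.range (Prod.map
          (OnePoint.some : JSpace i.1 jv → OnePoint (JSpace i.1 jv))
          (OnePoint.some : JSpace jv (q - 1) → OnePoint (JSpace jv (q - 1)))) := by
        rintro ⟨a, b⟩ hab
        rw [Set.range_prodMap]
        constructor
        · cases a with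
          | infty => exact absurd (hdΩ' (Or.inl rfl)) hab
          | coe a => exact ⟨a, rfl⟩
        · cases b with
          | infty => exact absurd (hdΩ' (Or.inr rfl)) hab
          | coe b => exact ⟨b, rfl⟩
      have hDc : IsCompact (Prod.map OnePoint.some OnePoint.some ⁻¹' Ω'ᶜ :
          Set (JSpace i.1 jv × JSpace jv (q - 1))) := by
        rw [IsEmbedding.isCompact_iff
          ((OnePoint.isOpenEmbedding_coe.prodMap OnePoint.isOpenEmbedding_coe).isEmbedding)]
        rw [Set.image_preimage_eq_inter_range, Set.inter_eq_self_of_subset_left hCr]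
        exact hCc
      have hKc : IsCompact ((fun w : JSpace i.1 jv × JSpace jv (q - 1) =>
          addJ hij hq' w.1 w.2) '' (Prod.map OnePoint.some OnePoint.some ⁻¹' Ω'ᶜ)) :=
        hDc.image (continuous_addJ hij hq')
      set K : Set (JSpace i.1 (q - 1)) :=
        (fun w : JSpace i.1 jv × JSpace jv (q - 1) => addJ hij hq' w.1 w.2) ''
          (Prod.map OnePoint.some OnePoint.some ⁻¹' Ω'ᶜ) with hK
      refine ⟨N ×ˢ ({∞} ∪ OnePoint.some '' Kᶜ), ?_, ?_, ?_⟩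
      · rintro ⟨z', w⟩ ⟨hz'N, hw⟩
        rcases hw with h1 | h1
        · have h1' : w = ∞ := h1
          subst h1'
          show Quot.mk (RRel q p Z z0 act) ⟨i, (z', ∞)⟩ ∈ U
          left
          show fbar q p Z z0 act jv ⟨i, (z', ∞)⟩ ∈ V
          rw [fbar_mk_gt_infty z0 act i hij z']
          exact hbV
        · obtain ⟨u', hu'K, rfl⟩ := h1
          show Quot.mk (RRel q p Z z0 act) ⟨i, (z', OnePoint.some u')⟩ ∈ U
          by_cases hsl : ∃ m, q ≤ m ∧ m < jv ∧ u'.1 m = 0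
          · obtain ⟨m, hm1, hm2, h0⟩ := hsl
            left
            show fbar q p Z z0 act jv ⟨i, (z', OnePoint.some u')⟩ ∈ V
            rw [fbar_mk_gt_some z0 act i hij z' u',
              cellMk_eq_base q Z z0 (Or.inr (Or.inr ⟨loPart jv u', rfl, m, hm1, hm2, by
                show (if m < jv then u'.1 m else 0) = 0
                rw [if_pos hm2]; exact h0⟩))]
            exact hbV
          · by_cases hj0 : u'.1 jv = 0
            · have hrec : addJ hij hq' (hiPart jv u') (loPart jv u') = u' :=
                addJ_hiPart_loPart hij hq' u' hj0
              have hnD : (hiPart jv u', loPart jv u') ∉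
                  Prod.map OnePoint.some OnePoint.some ⁻¹' Ω'ᶜ := fun hmem =>
                hu'K ⟨_, hmem, hrec⟩
              have hΩ'mem : (OnePoint.some (hiPart jv u'), OnePoint.some (loPart jv u'))
                  ∈ Ω' := by
                simp only [Set.mem_preimage, Set.mem_compl_iff, not_not, Prod.map_apply]
                  at hnD
                exact hnD
              have hmemV := hNΩ' (Set.mk_mem_prod hz'N hΩ'mem)
              left
              show fbar q p Z z0 act jv ⟨i, (z', OnePoint.some u')⟩ ∈ V
              rw [fbar_mk_gt_some z0 act i hij z' u']
              exact hmemV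
            · have hns : NoSplit q jv u' := by
                intro m h1 h2 h0
                rcases lt_or_eq_of_le h2 with hlt | heq
                · exact hsl ⟨m, h1, hlt, h0⟩
                · exact hj0 (heq ▸ h0)
              rcases fbar_base_or_not_mem_fil hact_pt hact_comp i z' u' hij hns
                with hb | hnm
              · left
                show fbar q p Z z0 act jv ⟨i, (z', OnePoint.some u')⟩ ∈ V
                rw [hb]
                exact hbV
              · exact Or.inr ⟨hbV, hnm⟩
      · refine hNopen.prod ?_
        rw [OnePoint.isOpen_iff_of_mem (Or.inl rfl)]
        have hpre : (OnePoint.some ⁻¹' ({∞} ∪ OnePoint.some '' Kᶜ) :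
            Set (JSpace i.1 (q - 1)))ᶜ = K := by
          ext u'
          simp [OnePoint.coe_eq_coe, OnePoint.coe_ne_infty]
        rw [hpre]
        exact ⟨hKc.isClosed, hKc⟩
      · exact Set.mk_mem_prod (hzN rfl) (Or.inl rfl)

end Chunk5

section Realization

variable (q p : ℤ) (Z : ℤ → Type) [∀ i, TopologicalSpace (Z i)] (z0 : ∀ i, Z i)
  (act : ∀ n m : ℤ, C(Z n × OnePoint (JSpace n m), Z m))

theorem stmt15 (hqp : q ≤ p)
    -- the action maps are basepoint-preserving ...
    (hact_pt : ∀ n m (t : OnePoint (JSpace n m)), act n m (z0 n, t) = z0 m)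
    (hact_infty : ∀ n m (z : Z n), act n m (z, ∞) = z0 m)
    -- ... and compatible with composition (addition of sequences)
    (hact_comp : ∀ (n m l : ℤ) (hnm : m < n) (hml : l < m) (z : Z n)
      (s : JSpace n m) (t : JSpace m l),
      act n l (z, OnePoint.some (addJ hnm hml s t))
        = act m l (act n m (z, OnePoint.some s), OnePoint.some t)) :
    Monotone (Fil q p Z z0 act) ∧
    Fil q p Z z0 act p = Set.univ ∧
    ∀ j : Set.Icc q p,
      Nonempty (SubQ q p Z z0 act j.1 ≃ₜ CellQ q Z z0 j.1) := by
  refine ⟨fil_mono, ?_, ?_⟩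
  · apply Set.eq_univ_of_forall
    intro x
    induction x using Quot.ind with
    | _ y =>
      obtain ⟨i, w⟩ := y
      exact ⟨i, w, i.2.2, rfl⟩
  · intro j
    exact ⟨{ toFun := Fmap hact_pt hact_comp j
             invFun := Gmap (z0 := z0) (act := act) hqp j
             left_inv := Gmap_Fmap hact_pt hact_comp hqp j
             right_inv := Fmap_Gmap hact_pt hact_comp hqp j
             continuous_toFun := continuous_Fmap hact_pt hact_infty hact_comp hqp j
             continuous_invFun := continuous_Gmap hqp j }⟩

end Realization
end
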